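/- arXiv:1208.2983 — 8 statements merged into one kernel-verified Lean document; each statement's English description precedes it below -/
import Mathlib

section
/- Let A be a cellular algebra over an integral domain R with cell datum (A, *, Γ, ≥, T, C). Then A is cyclic cellular (every cell module is a cyclic A-module) if and only if for each γ ∈ Γ there exists y_γ ∈ A^γ with: (a) y_γ ≡ y_γ* mod Ā^γ; (b) A^γ = A y_γ A + Ā^γ; and (c) (A y_γ + Ā^γ)/Ā^γ ≅ Δ^γ as A-modules. -/
open scoped TensorProduct

/-- A cell datum (Graham–Lehrer cellular basis, in the weak form of Definition 2.1):
an `R`-linear algebra involution `star`, a poset `Γ`, finite index sets `T γ`, and a basis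
`c γ s t` satisfying the cellular multiplication rule (modulo the span `Ā^γ` of the basis
elements `c μ u w` with `μ > γ`) and the cellular involution rule. -/
structure CellDatum (R : Type*) [CommRing R] (A : Type*) [Ring A] [Algebra R A]
    (Γ : Type*) [PartialOrder Γ] (T : Γ → Type*) [∀ γ, Fintype (T γ)] where
  star : A →ₗ[R] A
  star_mul : ∀ a b : A, star (a * b) = star b * star a
  star_star : ∀ a : A, star (star a) = a
  c : (γ : Γ) → T γ → T γ → A
  indep : LinearIndependent R fun p : Σ γ : Γ, T γ × T γ => c p.1 p.2.1 p.2.2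
  span_top : Submodule.span R (Set.range fun p : Σ γ : Γ, T γ × T γ => c p.1 p.2.1 p.2.2) = ⊤
  mult : ∀ (γ : Γ) (s : T γ) (a : A), ∃ r : T γ → R, ∀ t : T γ,
    a * c γ s t - ∑ v : T γ, r v • c γ v t ∈
      Submodule.span R {x : A | ∃ μ : Γ, γ < μ ∧ ∃ u w : T μ, x = c μ u w}
  star_c : ∀ (γ : Γ) (s t : T γ),
    star (c γ s t) - c γ t s ∈
      Submodule.span R {x : A | ∃ μ : Γ, γ < μ ∧ ∃ u w : T μ, x = c μ u w}

namespace CellDatum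

variable {R : Type*} [CommRing R] {A : Type*} [Ring A] [Algebra R A]
  {Γ : Type*} [PartialOrder Γ] {T : Γ → Type*} [∀ γ, Fintype (T γ)]

/-- The ideal `Ā^γ`, spanned by the basis elements `c μ u w` with `μ > γ`. -/
def Abar (D : CellDatum R A Γ T) (γ : Γ) : Submodule R A :=
  Submodule.span R {x : A | ∃ μ : Γ, γ < μ ∧ ∃ u w : T μ, x = D.c μ u w}

/-- The ideal `A^γ`, spanned by the basis elements `c μ u w` with `μ ≥ γ`. -/
def Aup (D : CellDatum R A Γ T) (γ : Γ) : Submodule R A :=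
  Submodule.span R {x : A | ∃ μ : Γ, γ ≤ μ ∧ ∃ u w : T μ, x = D.c μ u w}

end CellDatum

/-- `e : T γ → M` exhibits the `A`-module `M` as (a copy of) the cell module `Δ^γ`:
`e` is an `R`-basis of `M`, and `A` acts on it by the structure coefficients of the cellular
basis. -/
def IsCellModule {R : Type*} [CommRing R] {A : Type*} [Ring A] [Algebra R A]
    {Γ : Type*} [PartialOrder Γ] {T : Γ → Type*} [∀ γ, Fintype (T γ)]
    (D : CellDatum R A Γ T) (γ : Γ) (M : Type*) [AddCommGroup M] [Module R M]
    [Module A M] [IsScalarTower R A M] (e : T γ → M) : Prop :=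
  LinearIndependent R e ∧ Submodule.span R (Set.range e) = ⊤ ∧
    ∀ (a : A) (s : T γ) (r : T γ → R),
      (∀ t : T γ, a * D.c γ s t - ∑ v : T γ, r v • D.c γ v t ∈ D.Abar γ) →
      a • e s = ∑ v : T γ, r v • e v

/-!
Write `Δ^γ` in its basis `e` and put `c(x, y) = ∑ x_s y_t c^γ_{s,t}` (`CellDatum.cellForm`) for
coordinate vectors `x` and `y`. Modulo `Ā^γ`, left multiplication by `a` acts on `c(x, y)` through
the first argument exactly as `a` acts on `Δ^γ`, and `*` swaps the two arguments. If `m` generates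
`Δ^γ` and `m̂` are its coordinates, then `y_γ = c(m̂, m̂)` works: `n ↦ c(n̂, m̂) + Ā^γ`
(`IsCellModule.cellEmbedding`) intertwines the actions and maps onto `(A y_γ + Ā^γ)/Ā^γ`; it is
injective because the `c^γ_{s,t}` are independent modulo `Ā^γ` and `R` has no zero divisors; and
writing `e_s = a_s m` gives `c^γ_{s,t} ≡ a_s y_γ a_t^*`. Conversely, under an isomorphism as in
(c) the preimage of `y_γ + Ā^γ` generates `Δ^γ`.
-/

section Intertwining

variable {R : Type*} [CommRing R] {A : Type*} [Ring A] [Algebra R A]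
  {M : Type*} [AddCommGroup M] [Module R M] [Module A M] [IsScalarTower R A M]

lemma Submodule.map_mkQ_span_mul_sup (I : Submodule R A) (y : A) :
    Submodule.map I.mkQ (Submodule.span R {z : A | ∃ a : A, z = a * y} ⊔ I) =
      LinearMap.range (I.mkQ ∘ₗ LinearMap.mulRight R y) := by
  have hspan : Submodule.span R {z : A | ∃ a : A, z = a * y} =
      LinearMap.range (LinearMap.mulRight R y) := by
    rw [← Submodule.span_eq (LinearMap.range _)]
    congr 1
    ext z
    simp [eq_comm]
  rw [Submodule.map_sup, Submodule.mkQ_map_self, sup_bot_eq, hspan, LinearMap.range_comp]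

lemma range_eq_range_mkQ_comp_mulRight_iff {I : Submodule R A} {χ : M →ₗ[R] A ⧸ I}
    (hinj : Function.Injective χ)
    (hχ : ∀ (a : A) (m : M) (x : A),
      Submodule.Quotient.mk x = χ m → χ (a • m) = Submodule.Quotient.mk (a * x))
    {m : M} {y : A} (hy : I.mkQ y = χ m) :
    LinearMap.range χ = LinearMap.range (I.mkQ ∘ₗ LinearMap.mulRight R y) ↔
      Submodule.span A {m} = ⊤ := by
  have hcomp : I.mkQ ∘ₗ LinearMap.mulRight R y =
      χ ∘ₗ (LinearMap.toSpanSingleton A M m).restrictScalars R :=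
    LinearMap.ext fun a => (hχ a m y hy).symm
  rw [hcomp, LinearMap.range_comp, LinearMap.range_eq_map χ,
    (Submodule.map_injective_of_injective hinj).eq_iff, LinearMap.range_restrictScalars,
    ← LinearMap.span_singleton_eq_range, eq_comm, Submodule.restrictScalars_eq_top_iff]

end Intertwining

namespace CellDatum

variable {R : Type*} [CommRing R] {A : Type*} [Ring A] [Algebra R A]
  {Γ : Type*} [PartialOrder Γ] {T : Γ → Type*} [∀ γ, Fintype (T γ)]
  (D : CellDatum R A Γ T)

/-- `D.Abar γ` and `D.Aup γ` are definitionally `D.cellSpan (Set.Ioi γ)` and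
`D.cellSpan (Set.Ici γ)`, so the lemmas below apply to them directly. -/
def cellSpan (S : Set Γ) : Submodule R A :=
  Submodule.span R {x : A | ∃ μ ∈ S, ∃ u w : T μ, x = D.c μ u w}

variable {D}

lemma c_mem_cellSpan {S : Set Γ} {μ : Γ} (hμ : μ ∈ S) (u w : T μ) :
    D.c μ u w ∈ D.cellSpan S :=
  Submodule.subset_span ⟨μ, hμ, u, w, rfl⟩

lemma Abar_le_cellSpan {S : Set Γ} (hS : IsUpperSet S) {μ : Γ} (hμ : μ ∈ S) :
    D.Abar μ ≤ D.cellSpan S :=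
  Submodule.span_mono fun _ ⟨ν, hν, u, w, hx⟩ => ⟨ν, hS.Ioi_subset hμ hν, u, w, hx⟩

lemma mul_mem_cellSpan_left {S : Set Γ} (hS : IsUpperSet S) (a : A) {x : A}
    (hx : x ∈ D.cellSpan S) : a * x ∈ D.cellSpan S := by
  suffices D.cellSpan S ≤ (D.cellSpan S).comap (LinearMap.mulLeft R a) from this hx
  refine Submodule.span_le.2 ?_
  rintro _ ⟨μ, hμ, u, w, rfl⟩
  obtain ⟨r, hr⟩ := D.mult μ u a
  have hsum : ∑ v, r v • D.c μ v w ∈ D.cellSpan S :=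
    Submodule.sum_mem _ fun v _ => Submodule.smul_mem _ _ (c_mem_cellSpan hμ v w)
  simpa using add_mem (Abar_le_cellSpan hS hμ (hr w)) hsum

lemma star_mem_cellSpan {S : Set Γ} (hS : IsUpperSet S) {x : A} (hx : x ∈ D.cellSpan S) :
    D.star x ∈ D.cellSpan S := by
  suffices D.cellSpan S ≤ (D.cellSpan S).comap D.star from this hx
  refine Submodule.span_le.2 ?_
  rintro _ ⟨μ, hμ, u, w, rfl⟩
  simpa using add_mem (Abar_le_cellSpan hS hμ (D.star_c μ u w)) (c_mem_cellSpan hμ w u)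

lemma mul_mem_cellSpan_right {S : Set Γ} (hS : IsUpperSet S) {x : A} (hx : x ∈ D.cellSpan S)
    (b : A) : x * b ∈ D.cellSpan S := by
  simpa [D.star_mul, D.star_star] using
    star_mem_cellSpan hS (mul_mem_cellSpan_left hS (D.star b) (star_mem_cellSpan hS hx))

section Quotient

variable {γ : Γ} {x x' : A}

lemma mkQ_Abar_mul_left (h : (D.Abar γ).mkQ x = (D.Abar γ).mkQ x') (a : A) :
    (D.Abar γ).mkQ (a * x) = (D.Abar γ).mkQ (a * x') := by
  simp only [Submodule.mkQ_apply, Submodule.Quotient.eq] at h ⊢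
  rw [← mul_sub]
  exact mul_mem_cellSpan_left (isUpperSet_Ioi γ) a h

lemma mkQ_Abar_mul_right (h : (D.Abar γ).mkQ x = (D.Abar γ).mkQ x') (b : A) :
    (D.Abar γ).mkQ (x * b) = (D.Abar γ).mkQ (x' * b) := by
  simp only [Submodule.mkQ_apply, Submodule.Quotient.eq] at h ⊢
  rw [← sub_mul]
  exact mul_mem_cellSpan_right (isUpperSet_Ioi γ) h b

lemma mkQ_Abar_star (h : (D.Abar γ).mkQ x = (D.Abar γ).mkQ x') :
    (D.Abar γ).mkQ (D.star x) = (D.Abar γ).mkQ (D.star x') := by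
  simp only [Submodule.mkQ_apply, Submodule.Quotient.eq] at h ⊢
  rw [← map_sub]
  exact star_mem_cellSpan (isUpperSet_Ioi γ) h

end Quotient

variable (D) in
def cellForm (γ : Γ) : (T γ → R) →ₗ[R] (T γ → R) →ₗ[R] A :=
  LinearMap.mk₂ R (fun x y => ∑ s, ∑ t, (x s * y t) • D.c γ s t)
    (fun _ _ _ => by simp only [Pi.add_apply, add_mul, add_smul, Finset.sum_add_distrib])
    (fun _ _ _ => by simp only [Pi.smul_apply, smul_eq_mul, mul_assoc, mul_smul, Finset.smul_sum])
    (fun _ _ _ => by simp only [Pi.add_apply, mul_add, add_smul, Finset.sum_add_distrib])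
    (fun _ _ _ => by
      simp only [Pi.smul_apply, smul_eq_mul, mul_left_comm, mul_smul, Finset.smul_sum])

section CellForm

variable {γ : Γ}

lemma cellForm_apply (x y : T γ → R) :
    D.cellForm γ x y = ∑ s, ∑ t, (x s * y t) • D.c γ s t := rfl

lemma cellForm_eq_sum_smul_sum (x y : T γ → R) :
    D.cellForm γ x y = ∑ t, y t • ∑ s, x s • D.c γ s t := by
  simp only [cellForm_apply, Finset.smul_sum, smul_smul, mul_comm (y _)]
  exact Finset.sum_comm

lemma cellForm_single_single [DecidableEq (T γ)] (s t : T γ) :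
    D.cellForm γ (Pi.single s 1) (Pi.single t 1) = D.c γ s t := by
  simp [cellForm_apply, Pi.single_apply]

lemma cellForm_mem_Aup (x y : T γ → R) : D.cellForm γ x y ∈ D.Aup γ :=
  Submodule.sum_mem _ fun s _ => Submodule.sum_mem _ fun t _ =>
    Submodule.smul_mem _ _ (c_mem_cellSpan Set.self_mem_Ici s t)

lemma mkQ_star_cellForm (x y : T γ → R) :
    (D.Abar γ).mkQ (D.star (D.cellForm γ x y)) = (D.Abar γ).mkQ (D.cellForm γ y x) := by
  have h : D.star (D.cellForm γ x y) - D.cellForm γ y x =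
      ∑ s, ∑ t, (x s * y t) • (D.star (D.c γ s t) - D.c γ t s) := by
    rw [cellForm_apply, cellForm_apply,
      Finset.sum_comm (f := fun s t => (y s * x t) • D.c γ s t)]
    simp only [map_sum, map_smul, smul_sub, Finset.sum_sub_distrib, mul_comm (y _)]
  rw [Submodule.mkQ_apply, Submodule.mkQ_apply, Submodule.Quotient.eq, h]
  exact Submodule.sum_mem _ fun s _ => Submodule.sum_mem _ fun t _ =>
    Submodule.smul_mem _ _ (D.star_c γ s t)

lemma cellForm_eq_zero_of_mem_Abar {x y : T γ → R} (h : D.cellForm γ x y ∈ D.Abar γ) :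
    D.cellForm γ x y = 0 := by
  have hdisj := D.indep.disjoint_span_image (s := {p | p.1 = γ}) (t := {p | γ < p.1})
    (Set.disjoint_left.2 fun p (hp : p.1 = γ) (hp' : γ < p.1) => (hp ▸ hp').false)
  refine Submodule.disjoint_def.1 hdisj _ ?_ (Submodule.span_mono ?_ h)
  · exact Submodule.sum_mem _ fun s _ => Submodule.sum_mem _ fun t _ =>
      Submodule.smul_mem _ _ (Submodule.subset_span ⟨⟨γ, s, t⟩, rfl, rfl⟩)
  · rintro _ ⟨μ, hμ, u, w, rfl⟩
    exact ⟨⟨μ, u, w⟩, hμ, rfl⟩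

lemma eq_zero_or_eq_zero_of_cellForm_eq_zero [NoZeroDivisors R] {x y : T γ → R}
    (h : D.cellForm γ x y = 0) : x = 0 ∨ y = 0 := by
  have hli : LinearIndependent R fun p : T γ × T γ => D.c γ p.1 p.2 :=
    D.indep.comp (Sigma.mk γ) sigma_mk_injective
  have hcoef := Fintype.linearIndependent_iff.1 hli (fun p => x p.1 * y p.2)
    (by rw [Fintype.sum_prod_type]; exact h)
  by_contra! hxy
  obtain ⟨s, hs⟩ := Function.ne_iff.1 hxy.1
  obtain ⟨t, ht⟩ := Function.ne_iff.1 hxy.2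
  exact mul_ne_zero hs ht (hcoef (s, t))

end CellForm

end CellDatum

namespace IsCellModule

open CellDatum

variable {R : Type*} [CommRing R] {A : Type*} [Ring A] [Algebra R A]
  {Γ : Type*} [PartialOrder Γ] {T : Γ → Type*} [∀ γ, Fintype (T γ)]
  {D : CellDatum R A Γ T} {γ : Γ} {M : Type*} [AddCommGroup M] [Module R M] [Module A M]
  [IsScalarTower R A M] {e : T γ → M}

noncomputable def basis (hM : IsCellModule D γ M e) : Module.Basis (T γ) R M :=
  .mk hM.1 hM.2.1.ge

lemma basis_apply (hM : IsCellModule D γ M e) (s : T γ) : hM.basis s = e s :=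
  Module.Basis.mk_apply _ _ s

lemma equivFun_apply_self [DecidableEq (T γ)] (hM : IsCellModule D γ M e) (s : T γ) :
    hM.basis.equivFun (e s) = Pi.single s 1 := by
  ext t
  rw [← hM.basis_apply, Module.Basis.equivFun_self, Pi.single_apply]
  exact if_congr eq_comm rfl rfl

lemma mkQ_cellForm_smul (hM : IsCellModule D γ M e) (a : A) (n : M) (y : T γ → R) :
    (D.Abar γ).mkQ (D.cellForm γ (hM.basis.equivFun (a • n)) y) =
      (D.Abar γ).mkQ (a * D.cellForm γ (hM.basis.equivFun n) y) := by
  let coord : M →ₗ[R] A := (D.cellForm γ).flip y ∘ₗ hM.basis.equivFun.toLinearMap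
  suffices (D.Abar γ).mkQ ∘ₗ coord ∘ₗ DistribSMul.toLinearMap R M a =
      (D.Abar γ).mkQ ∘ₗ LinearMap.mulLeft R a ∘ₗ coord from LinearMap.congr_fun this n
  refine hM.basis.ext fun s => ?_
  classical
  obtain ⟨r, hr⟩ := D.mult γ s a
  have hact : a • e s = hM.basis.equivFun.symm r := by
    simpa [Module.Basis.equivFun_symm_apply, hM.basis_apply] using hM.2.2 a s r hr
  simp only [coord, LinearMap.comp_apply, DistribSMul.toLinearMap_apply, hM.basis_apply,
    hact, LinearEquiv.coe_coe, LinearEquiv.apply_symm_apply, hM.equivFun_apply_self,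
    LinearMap.flip_apply, LinearMap.mulLeft_apply, Submodule.mkQ_apply, Submodule.Quotient.eq]
  rw [cellForm_eq_sum_smul_sum, cellForm_eq_sum_smul_sum, Finset.mul_sum,
    ← Finset.sum_sub_distrib]
  refine Submodule.sum_mem _ fun t _ => ?_
  rw [mul_smul_comm, ← smul_sub]
  refine Submodule.smul_mem _ _ ?_
  have h : a * D.c γ s t - ∑ v, r v • D.c γ v t ∈ D.Abar γ := hr t
  simpa [Pi.single_apply] using neg_mem h

noncomputable def cellEmbedding (hM : IsCellModule D γ M e) (m : M) :
    M →ₗ[R] A ⧸ D.Abar γ :=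
  (D.Abar γ).mkQ ∘ₗ (D.cellForm γ).flip (hM.basis.equivFun m) ∘ₗ
    hM.basis.equivFun.toLinearMap

lemma cellEmbedding_apply (hM : IsCellModule D γ M e) (m n : M) :
    hM.cellEmbedding m n =
      (D.Abar γ).mkQ (D.cellForm γ (hM.basis.equivFun n) (hM.basis.equivFun m)) :=
  rfl

lemma cellEmbedding_smul (hM : IsCellModule D γ M e) (m : M) (a : A) (n : M) (x : A)
    (h : Submodule.Quotient.mk x = hM.cellEmbedding m n) :
    hM.cellEmbedding m (a • n) = Submodule.Quotient.mk (a * x) := by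
  rw [cellEmbedding_apply, mkQ_cellForm_smul]
  exact (mkQ_Abar_mul_left h a).symm

lemma cellEmbedding_injective [NoZeroDivisors R] (hM : IsCellModule D γ M e) {m : M}
    (hm : Submodule.span A {m} = ⊤) : Function.Injective (hM.cellEmbedding m) := by
  refine (injective_iff_map_eq_zero _).2 fun n hn => ?_
  rw [cellEmbedding_apply, Submodule.mkQ_apply, Submodule.Quotient.mk_eq_zero] at hn
  rcases eq_zero_or_eq_zero_of_cellForm_eq_zero (cellForm_eq_zero_of_mem_Abar hn) with h | h
  · exact hM.basis.equivFun.map_eq_zero_iff.1 h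
  · rw [hM.basis.equivFun.map_eq_zero_iff.1 h, Submodule.span_zero_singleton] at hm
    exact (Submodule.mem_bot A).1 (hm ▸ Submodule.mem_top)

lemma mkQ_c_eq_mul_cellForm_mul (hM : IsCellModule D γ M e) {m : M} {a b : A} {s t : T γ}
    (ha : a • m = e s) (hb : b • m = e t) :
    (D.Abar γ).mkQ (D.c γ s t) = (D.Abar γ).mkQ
      (a * D.cellForm γ (hM.basis.equivFun m) (hM.basis.equivFun m) * D.star b) := by
  classical
  set m' := hM.basis.equivFun m
  have hb' : (D.Abar γ).mkQ (D.cellForm γ (Pi.single t 1) m') =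
      (D.Abar γ).mkQ (b * D.cellForm γ m' m') := by
    rw [← hM.equivFun_apply_self, ← hb, mkQ_cellForm_smul]
  calc (D.Abar γ).mkQ (D.c γ s t)
      = (D.Abar γ).mkQ (D.cellForm γ (hM.basis.equivFun (a • m)) (Pi.single t 1)) := by
        rw [ha, hM.equivFun_apply_self, cellForm_single_single]
    _ = (D.Abar γ).mkQ (a * D.cellForm γ m' (Pi.single t 1)) := hM.mkQ_cellForm_smul a m _
    _ = (D.Abar γ).mkQ (a * D.star (D.cellForm γ (Pi.single t 1) m')) :=
        mkQ_Abar_mul_left (mkQ_star_cellForm _ _).symm a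
    _ = (D.Abar γ).mkQ (a * (D.star (D.cellForm γ m' m') * D.star b)) := by
        rw [← D.star_mul]
        exact mkQ_Abar_mul_left (mkQ_Abar_star hb') a
    _ = (D.Abar γ).mkQ (a * D.cellForm γ m' m' * D.star b) := by
        rw [mul_assoc]
        exact mkQ_Abar_mul_left (mkQ_Abar_mul_right (mkQ_star_cellForm m' m') _) a

lemma Aup_eq_span_mul_sup (hM : IsCellModule D γ M e) {m : M} (hm : Submodule.span A {m} = ⊤) :
    D.Aup γ = Submodule.span R {x : A | ∃ a b : A,
      x = a * D.cellForm γ (hM.basis.equivFun m) (hM.basis.equivFun m) * b} ⊔ D.Abar γ := by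
  have hgen (s : T γ) : ∃ a : A, a • m = e s :=
    Submodule.mem_span_singleton.1 (hm ▸ Submodule.mem_top)
  refine le_antisymm (Submodule.span_le.2 ?_)
    (sup_le (Submodule.span_le.2 ?_) (D.Abar_le_cellSpan (isUpperSet_Ici γ) Set.self_mem_Ici))
  · rintro _ ⟨μ, hμ, u, w, rfl⟩
    rcases hμ.eq_or_lt with rfl | hlt
    · obtain ⟨a, ha⟩ := hgen u
      obtain ⟨b, hb⟩ := hgen w
      rw [← sub_add_cancel (D.c γ u w) (a * _ * D.star b)]
      have hc := (Submodule.Quotient.eq _).1 (hM.mkQ_c_eq_mul_cellForm_mul ha hb)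
      exact add_mem (Submodule.mem_sup_right hc)
        (Submodule.mem_sup_left (Submodule.subset_span ⟨a, D.star b, rfl⟩))
    · exact Submodule.mem_sup_right (D.c_mem_cellSpan hlt u w)
  · rintro _ ⟨a, b, rfl⟩
    exact D.mul_mem_cellSpan_right (isUpperSet_Ici γ)
      (D.mul_mem_cellSpan_left (isUpperSet_Ici γ) a (D.cellForm_mem_Aup _ _)) b

end IsCellModule

/-- A cellular algebra `A` is cyclic cellular (every cell module is a
cyclic `A`-module) if and only if for each `γ ∈ Γ` there exists `y_γ ∈ A^γ` with
(a) `y_γ ≡ y_γ* mod Ā^γ`, (b) `A^γ = A y_γ A + Ā^γ`, and (c) `(A y_γ + Ā^γ)/Ā^γ ≅ Δ^γ` as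
`A`-modules.  Condition (c) is expressed by an injective `R`-linear map
`χ : Δ^γ → A/Ā^γ` whose range is the image of `A y_γ + Ā^γ` and which intertwines the
`A`-actions. -/
theorem stmt_2 {R : Type*} [CommRing R] [IsDomain R] {A : Type*} [Ring A] [Algebra R A]
    {Γ : Type*} [PartialOrder Γ] {T : Γ → Type*} [∀ γ, Fintype (T γ)]
    (D : CellDatum R A Γ T)
    (M : Γ → Type*) [∀ γ, AddCommGroup (M γ)] [∀ γ, Module R (M γ)]
    [∀ γ, Module A (M γ)] [∀ γ, IsScalarTower R A (M γ)]
    (e : ∀ γ, T γ → M γ) (hM : ∀ γ, IsCellModule D γ (M γ) (e γ)) :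
    (∀ γ, ∃ m : M γ, Submodule.span A {m} = ⊤) ↔
    (∀ γ : Γ, ∃ y ∈ D.Aup γ,
      (D.star y - y ∈ D.Abar γ) ∧
      (D.Aup γ = Submodule.span R {x : A | ∃ a b : A, x = a * y * b} ⊔ D.Abar γ) ∧
      (∃ χ : M γ →ₗ[R] (A ⧸ D.Abar γ),
        Function.Injective χ ∧
        LinearMap.range χ =
          Submodule.map (D.Abar γ).mkQ
            (Submodule.span R {z : A | ∃ a : A, z = a * y} ⊔ D.Abar γ) ∧
        ∀ (a : A) (m : M γ) (x : A),
          Submodule.Quotient.mk x = χ m →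
          χ (a • m) = Submodule.Quotient.mk (a * x))) := by
  refine forall_congr' fun γ =>
    ⟨fun ⟨m, hm⟩ => ?_, fun ⟨y, _, _, _, χ, hinj, hrange, hχ⟩ => ?_⟩
  · have hrange : LinearMap.range ((hM γ).cellEmbedding m) = _ :=
      (range_eq_range_mkQ_comp_mulRight_iff ((hM γ).cellEmbedding_injective hm)
        ((hM γ).cellEmbedding_smul m) rfl).2 hm
    exact ⟨_, D.cellForm_mem_Aup _ _, (Submodule.Quotient.eq _).1 (D.mkQ_star_cellForm _ _),
      (hM γ).Aup_eq_span_mul_sup hm, (hM γ).cellEmbedding m,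
      (hM γ).cellEmbedding_injective hm, hrange.trans (Submodule.map_mkQ_span_mul_sup _ _).symm,
      (hM γ).cellEmbedding_smul m⟩
  · rw [Submodule.map_mkQ_span_mul_sup] at hrange
    obtain ⟨m, hm⟩ : (D.Abar γ).mkQ y ∈ LinearMap.range χ := by
      rw [hrange]; exact ⟨1, by simp⟩
    exact ⟨m, (range_eq_range_mkQ_comp_mulRight_iff hinj hχ hm.symm).1 hrange⟩
end

section
/- There exists a commutative cellular algebra over ℤ that is not cyclic cellular. Specifically, let Γ = {1, 2} with 2 > 1, T(1) = {1}, T(2) = {1, 2}, and let A be the free ℤ-module with basis {1 = c¹₁₁} ∪ {c²_{s,t} : 1 ≤ s, t ≤ 2}, with (c^γ_{s,t})* = c^γ_{t,s}, 1 acting as identity, and all other products of basis elements equal to zero. Then A is a commutative cellular algebra that is not cyclic cellular. -/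
open scoped TensorProduct

instance (b : Bool) : Fintype (cond b (Fin 2) PUnit) := by
  cases b
  · exact inferInstanceAs (Fintype PUnit)
  · exact inferInstanceAs (Fintype (Fin 2))

/-- The data of the example: a commutative cellular algebra over `ℤ` with poset
`Γ = {1, 2}` (`2 > 1`, modelled by `Bool` with `false < true`), `T 1 = {1}`,
`T 2 = {1, 2}`, basis `{1 = c¹₁₁} ∪ {c²ₛₜ}`, `(c^γ_{s,t})* = c^γ_{t,s}`, `1` acting as the
identity, all other products of basis elements zero — which is not cyclic cellular (the cell
module at the top element is not cyclic). -/
structure BadExample where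
  A : Type
  [instCR : CommRing A]
  D : CellDatum ℤ A Bool (fun b => cond b (Fin 2) PUnit)
  c_bot : D.c false PUnit.unit PUnit.unit = 1
  star_eq : ∀ (γ : Bool) (s t : cond γ (Fin 2) PUnit), D.star (D.c γ s t) = D.c γ t s
  prod_zero : ∀ s t u v : Fin 2, D.c true s t * D.c true u v = 0
  M : Type
  [iM1 : AddCommGroup M]
  [iM3 : Module A M]
  [iM4 : IsScalarTower ℤ A M]
  e : Fin 2 → M
  cell : IsCellModule D true M e
  notcyclic : ∀ m : M, Submodule.span A {m} ≠ ⊤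

/-!
The algebra is `A = ℤ ⊕ M₂(ℤ)` with `M₂(ℤ)` a square-zero ideal (`TrivSqZeroExt`), so it is
commutative; the involution transposes the `M₂(ℤ)` part, and the cellular basis is `1` together
with the matrix units. Modulo the higher cells, `A` acts on each cell through the augmentation
`A → ℤ`. So the top cell module is `ℤ²` with `A` acting by integer scalars: its `A`-submodules
are its subgroups, and `ℤ²` is not generated by a single element.
-/

theorem Submodule.span_singleton_eq_top_of_smul_eq_scalar {R A M : Type*} [Semiring R]
    [Semiring A] [AddCommMonoid M] [Module R M] [Module A M]
    (hA : ∀ a : A, ∃ r : R, ∀ x : M, a • x = r • x) {m : M}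
    (h : Submodule.span A {m} = ⊤) : Submodule.span R {m} = ⊤ := by
  refine eq_top_iff'.mpr fun x => ?_
  obtain ⟨a, rfl⟩ := Submodule.mem_span_singleton.mp (h ▸ Submodule.mem_top : x ∈ span A {m})
  obtain ⟨r, hr⟩ := hA a
  rw [hr]
  exact Submodule.smul_mem _ r (Submodule.mem_span_singleton_self m)

theorem Submodule.span_singleton_ne_top_of_one_lt_finrank {R M : Type*} [Semiring R]
    [StrongRankCondition R] [AddCommMonoid M] [Module R M] (h : 1 < Module.finrank R M)
    (m : M) : Submodule.span R {m} ≠ ⊤ := by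
  intro htop
  have := finrank_span_le_card (R := R) ({m} : Set M)
  rw [htop, finrank_top] at this
  simp at this
  omega

open TrivSqZeroExt

namespace NonCyclicCellular

instance (b : Bool) : DecidableEq (cond b (Fin 2) PUnit) := by
  cases b
  · exact inferInstanceAs (DecidableEq PUnit)
  · exact inferInstanceAs (DecidableEq (Fin 2))

abbrev A := TrivSqZeroExt ℤ (Matrix (Fin 2) (Fin 2) ℤ)

def c : (γ : Bool) → cond γ (Fin 2) PUnit → cond γ (Fin 2) PUnit → A
  | false, _, _ => 1
  | true, s, t => inr (Matrix.single s t 1)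

def star : A →ₗ[ℤ] A :=
  (TrivSqZeroExt.map (Matrix.transposeLinearEquiv (Fin 2) (Fin 2) ℤ ℤ).toLinearMap).toLinearMap

@[simp] theorem fst_star (a : A) : (star a).fst = a.fst := fst_map _ a

@[simp] theorem snd_star (a : A) : (star a).snd = a.snd.transpose := snd_map _ a

theorem star_mul (a b : A) : star (a * b) = star b * star a := by
  rw [star, AlgHom.toLinearMap_apply, map_mul, mul_comm]; rfl

theorem star_star (a : A) : star (star a) = a := by
  ext : 1 <;> simp

theorem star_c (γ : Bool) (s t : cond γ (Fin 2) PUnit) : star (c γ s t) = c γ t s := by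
  cases γ
  · rfl
  · ext : 1
    · rfl
    · simp [c]

def cellIndexEquiv :
    (Σ γ : Bool, cond γ (Fin 2) PUnit × cond γ (Fin 2) PUnit) ≃ Unit ⊕ (Fin 2 × Fin 2) where
  toFun
    | ⟨false, _⟩ => .inl ()
    | ⟨true, p⟩ => .inr p
  invFun
    | .inl _ => ⟨false, .unit, .unit⟩
    | .inr p => ⟨true, p⟩
  left_inv := by rintro ⟨_ | _, _⟩ <;> rfl
  right_inv := by rintro (_ | _) <;> rfl

noncomputable def cellBasis :
    Module.Basis (Σ γ : Bool, cond γ (Fin 2) PUnit × cond γ (Fin 2) PUnit) ℤ A :=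
  ((Module.Basis.singleton Unit ℤ).prod (Matrix.stdBasis ℤ (Fin 2) (Fin 2))).reindex
    cellIndexEquiv.symm

theorem coe_cellBasis : ⇑cellBasis = fun p => c p.1 p.2.1 p.2.2 := by
  funext ⟨γ, s, t⟩
  have h := Module.Basis.reindex_apply
    ((Module.Basis.singleton Unit ℤ).prod (Matrix.stdBasis ℤ (Fin 2) (Fin 2)))
    cellIndexEquiv.symm ⟨γ, s, t⟩
  cases γ
  · exact h.trans (Prod.ext (by simp [cellIndexEquiv]; rfl) (by simp [cellIndexEquiv]; rfl))
  · exact h.trans (Prod.ext (by simp [cellIndexEquiv]; rfl)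
      (by simp [cellIndexEquiv, Matrix.stdBasis_eq_single]; rfl))

-- `cellDatum.Abar γ`, needed before `cellDatum` exists.
def above (γ : Bool) : Submodule ℤ A :=
  Submodule.span ℤ {x : A | ∃ μ : Bool, γ < μ ∧ ∃ u w : cond μ (Fin 2) PUnit, x = c μ u w}

theorem above_true : above true = ⊥ := by
  rw [above, Submodule.span_eq_bot]
  rintro x ⟨μ, hμ, -⟩
  exact absurd hμ (not_lt_of_ge le_top)

theorem inr_mem_above_false (x : Matrix (Fin 2) (Fin 2) ℤ) : inr x ∈ above false := by
  have hx : x ∈ Submodule.span ℤ (Set.range (Matrix.stdBasis ℤ (Fin 2) (Fin 2))) :=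
    (Matrix.stdBasis ℤ (Fin 2) (Fin 2)).span_eq ▸ Submodule.mem_top
  have := Submodule.mem_map_of_mem (f := inrHom ℤ (Matrix (Fin 2) (Fin 2) ℤ)) hx
  rw [← Submodule.span_image] at this
  refine Submodule.span_mono ?_ this
  rintro _ ⟨_, ⟨⟨s, t⟩, rfl⟩, rfl⟩
  exact ⟨true, Bool.false_lt_true, s, t, by simp [c, Matrix.stdBasis_eq_single]⟩

theorem mul_inr (a : A) (x : Matrix (Fin 2) (Fin 2) ℤ) : a * inr x = a.fst • inr x := by
  ext : 1 <;> simp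

theorem exists_mul_c_sub_mem_above (γ : Bool) (s : cond γ (Fin 2) PUnit) (a : A) :
    ∃ r : cond γ (Fin 2) PUnit → ℤ, ∀ t : cond γ (Fin 2) PUnit,
      a * c γ s t - ∑ v : cond γ (Fin 2) PUnit, r v • c γ v t ∈ above γ := by
  cases γ
  · refine ⟨fun _ => a.fst, fun t => ?_⟩
    convert inr_mem_above_false a.snd
    ext : 1 <;> simp [c]
  · refine ⟨Pi.single s a.fst, fun t => ?_⟩
    rw [c, mul_inr, sub_eq_zero.mpr]
    · exact zero_mem _
    · simp [c, Pi.single_apply]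

noncomputable def cellDatum : CellDatum ℤ A Bool (fun b => cond b (Fin 2) PUnit) where
  star := star
  star_mul := star_mul
  star_star := star_star
  c := c
  indep := coe_cellBasis ▸ cellBasis.linearIndependent
  span_top := coe_cellBasis ▸ cellBasis.span_eq
  mult := exists_mul_c_sub_mem_above
  star_c γ s t := by rw [star_c, sub_self]; exact zero_mem _

instance : Module A (Fin 2 → ℤ) :=
  Module.compHom _ (fstHom ℤ ℤ (Matrix (Fin 2) (Fin 2) ℤ)).toRingHom

theorem smul_eq_fst_smul (a : A) (m : Fin 2 → ℤ) : a • m = a.fst • m := rfl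

theorem coeff_eq_of_mul_c_true {a : A} {s : Fin 2} {r : Fin 2 → ℤ}
    (h : a * c true s (0 : Fin 2) = ∑ v : Fin 2, r v • c true v (0 : Fin 2)) :
    r = Pi.single s a.fst := by
  funext v
  have := congr_arg (fun x : A => x.snd v 0) h
  rw [c, mul_inr] at this
  simp only [c, snd_sum, snd_smul, snd_inr, Matrix.sum_apply, Matrix.smul_apply,
    Matrix.single_apply, and_true, smul_eq_mul] at this
  simpa [Pi.single_apply, eq_comm] using this.symm

theorem abar_true : cellDatum.Abar true = ⊥ := above_true

theorem isCellModule_top : IsCellModule cellDatum true (Fin 2 → ℤ) (Pi.basisFun ℤ (Fin 2)) := by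
  refine ⟨(Pi.basisFun ℤ (Fin 2)).linearIndependent, (Pi.basisFun ℤ (Fin 2)).span_eq,
    fun a s r h => ?_⟩
  have hr : r = Pi.single s a.fst :=
    coeff_eq_of_mul_c_true (sub_eq_zero.mp ((Submodule.mem_bot ℤ).mp (abar_true ▸ h (0 : Fin 2))))
  rw [hr, smul_eq_fst_smul]
  simp [Pi.single_apply]

theorem span_singleton_ne_top (m : Fin 2 → ℤ) : Submodule.span A {m} ≠ ⊤ :=
  fun h => Submodule.span_singleton_ne_top_of_one_lt_finrank (by simp) m
    (Submodule.span_singleton_eq_top_of_smul_eq_scalar (fun a => ⟨a.fst, smul_eq_fst_smul a⟩) h)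

end NonCyclicCellular

open NonCyclicCellular in
/-- There exists a commutative (abelian) cellular algebra over `ℤ` that is
not cyclic cellular, namely the one described in `BadExample`. -/
theorem stmt_6 : Nonempty BadExample :=
  ⟨{ A := A
     D := cellDatum
     c_bot := rfl
     star_eq := star_c
     prod_zero _ _ _ _ := inr_mul_inr ℤ _ _
     M := Fin 2 → ℤ
     e := Pi.basisFun ℤ (Fin 2)
     cell := isCellModule_top
     notcyclic := span_singleton_ne_top }⟩
end

section
/- Let A₁, ..., A_K be cellular algebras over an integral domain R with posets Γ₁, ..., Γ_K and cellular bases {a^γ_{s,t}}. Then the tensor product A₁ ⊗_R ⋯ ⊗_R A_K is a cellular algebra with involution the tensor product of the involutions, poset the product poset Γ₁ × ⋯ × Γ_K, index sets T(γ₁) × ⋯ × T(γ_K), and cellular basis the simple tensors a^{γ₁}_{s₁,t₁} ⊗ ⋯ ⊗ a^{γ_K}_{s_K,t_K}. Moreover the cell modules of the tensor product algebra are the tensor products Δ^{γ₁} ⊗ ⋯ ⊗ Δ^{γ_K} of cell modules, and if each A_i is cyclic cellular then so is the tensor product. -/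
open scoped TensorProduct

open PiTensorProduct

/-!
The simple tensors of cellular basis elements form a basis of `⨂ Aᵢ` (tensor product of bases),
and the coordinates of a simple tensor are the products of the coordinates of its factors. The
cellular multiplication rule is `R`-linear in the acting element, so it suffices to check it on
simple tensors `⨂ fᵢ`, where it is the tensor product of the rules of the factors: the product
`⨂ (fᵢ cᵢ)` and the main term `⨂ (∑ rᵢ cᵢ)` have coordinates that vanish below `γᵢ` and agree at
`γᵢ` in every factor, so their difference lives on cells `μ > γ` of the product poset. The same
comparison gives the involution rule. Since structure coefficients modulo `Ā^γ` can be read off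
as coordinates, they are unique, so the action on a tensor product of cell modules is pinned
down linearly and again only needs checking on simple tensors. Cyclicity is inherited because
`⨂ (aᵢ • mᵢ) = (⨂ aᵢ) • ⨂ mᵢ`.
-/

open Module

section Coefficients

variable {R : Type*} [CommRing R]

theorem exists_coeff_of_span_eq_top {A : Type*} [Ring A] [Algebra R A] {ι κ : Type*} [Fintype ι]
    {S : Set A} (hS : Submodule.span R S = ⊤) (P : Submodule R A) (b : κ → A)
    (c : ι → κ → A) (h : ∀ a ∈ S, ∃ r : ι → R, ∀ t, a * b t - ∑ v, r v • c v t ∈ P) (a : A) :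
    ∃ r : ι → R, ∀ t, a * b t - ∑ v, r v • c v t ∈ P := by
  have ha : a ∈ Submodule.span R S := hS ▸ Submodule.mem_top
  induction ha using Submodule.span_induction with
  | mem a ha => exact h a ha
  | zero => exact ⟨0, fun t => by simp⟩
  | add x y _ _ hx hy =>
    obtain ⟨rx, hrx⟩ := hx
    obtain ⟨ry, hry⟩ := hy
    refine ⟨rx + ry, fun t => ?_⟩
    convert P.add_mem (hrx t) (hry t) using 1
    simp only [Pi.add_apply, add_smul, Finset.sum_add_distrib, add_mul]
    abel
  | smul k x _ hx =>
    obtain ⟨r, hr⟩ := hx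
    refine ⟨k • r, fun t => ?_⟩
    convert P.smul_mem k (hr t) using 1
    simp only [Pi.smul_apply, smul_sub, smul_mul_assoc, Finset.smul_sum, smul_smul, smul_eq_mul]

theorem mem_span_cells_iff {M : Type*} [AddCommGroup M] [Module R M] {Γ : Type*}
    {T : Γ → Type*} (b : Basis (Σ γ, T γ × T γ) R M) (c : ∀ γ, T γ → T γ → M)
    (hb : ∀ γ s t, b ⟨γ, s, t⟩ = c γ s t) (P : Γ → Prop) (x : M) :
    x ∈ Submodule.span R {x | ∃ μ, P μ ∧ ∃ u w : T μ, x = c μ u w} ↔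
      ∀ p, ¬ P p.1 → b.repr x p = 0 := by
  have hcells : {x | ∃ μ, P μ ∧ ∃ u w : T μ, x = c μ u w} = b '' {p | P p.1} := by
    ext x
    constructor
    · rintro ⟨μ, hμ, u, w, rfl⟩
      exact ⟨⟨μ, u, w⟩, hμ, hb μ u w⟩
    · rintro ⟨⟨μ, u, w⟩, hμ, rfl⟩
      exact ⟨μ, hμ, u, w, hb μ u w⟩
  rw [hcells, b.mem_span_image, Set.subset_def]
  simp only [Finset.mem_coe, Finsupp.mem_support_iff, Set.mem_ofPred_eq]
  exact forall_congr' fun p => not_imp_comm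

end Coefficients

namespace CellDatum

variable {R : Type*} [CommRing R] {A : Type*} [Ring A] [Algebra R A]
  {Γ : Type*} [PartialOrder Γ] {T : Γ → Type*} [∀ γ, Fintype (T γ)] (D : CellDatum R A Γ T)

noncomputable def basis : Basis (Σ γ, T γ × T γ) R A :=
  Basis.mk D.indep D.span_top.ge

theorem basis_apply (γ : Γ) (s t : T γ) : D.basis ⟨γ, s, t⟩ = D.c γ s t :=
  Basis.mk_apply _ _ _

theorem mem_Abar_iff {γ : Γ} {x : A} :
    x ∈ D.Abar γ ↔ ∀ p, ¬ γ < p.1 → D.basis.repr x p = 0 :=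
  mem_span_cells_iff _ _ D.basis_apply _ x

theorem mem_Aup_iff {γ : Γ} {x : A} :
    x ∈ D.Aup γ ↔ ∀ p, ¬ γ ≤ p.1 → D.basis.repr x p = 0 :=
  mem_span_cells_iff _ _ D.basis_apply _ x

theorem coeff_eq_repr {γ : Γ} {s t : T γ} {a : A} {r : T γ → R}
    (h : a * D.c γ s t - ∑ v, r v • D.c γ v t ∈ D.Abar γ) (v : T γ) :
    r v = D.basis.repr (a * D.c γ s t) ⟨γ, v, t⟩ := by
  classical
  have := D.mem_Abar_iff.mp h ⟨γ, v, t⟩ (lt_irrefl γ)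
  simp only [← D.basis_apply, map_sub, map_sum, map_smul, Basis.repr_self, Finsupp.sub_apply,
    Finsupp.coe_finsetSum, Finset.sum_apply, Finsupp.smul_apply, Finsupp.single_apply] at this
  simp only [D.basis_apply, smul_eq_mul, mul_ite, mul_one, mul_zero, Sigma.mk.injEq, heq_eq_eq,
    Prod.mk.injEq, true_and, and_true, Finset.sum_ite_eq', Finset.mem_univ, if_true] at this
  exact (sub_eq_zero.mp this).symm

theorem isCellModule_of_span {γ : Γ} {M : Type*} [AddCommGroup M] [Module R M] [Module A M]
    [IsScalarTower R A M] {e : T γ → M} (hli : LinearIndependent R e)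
    (hsp : Submodule.span R (Set.range e) = ⊤) {S : Set A} (hS : Submodule.span R S = ⊤)
    (h : ∀ a ∈ S, ∀ s, ∃ r : T γ → R,
      (∀ t, a * D.c γ s t - ∑ v, r v • D.c γ v t ∈ D.Abar γ) ∧ a • e s = ∑ v, r v • e v) :
    IsCellModule D γ M e := by
  refine ⟨hli, hsp, fun a s r hr => ?_⟩
  let coeff : T γ → A →ₗ[R] R := fun v =>
    D.basis.coord ⟨γ, v, s⟩ ∘ₗ LinearMap.mulRight R (D.c γ s s)
  have hcoeff : ∀ a (r : T γ → R), (∀ t, a * D.c γ s t - ∑ v, r v • D.c γ v t ∈ D.Abar γ) →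
      r = fun v => coeff v a := fun a r hr => funext (D.coeff_eq_repr (hr s))
  have hact : (LinearMap.toSpanSingleton A M (e s)).restrictScalars R =
      ∑ v, (coeff v).smulRight (e v) := by
    refine LinearMap.ext_on hS fun a ha => ?_
    obtain ⟨r, hr, hae⟩ := h a ha s
    simp [hae, hcoeff a r hr]
  rw [hcoeff a r hr]
  simpa using LinearMap.congr_fun hact a

end CellDatum

theorem tprod_sum_smul {R : Type*} [CommRing R] {ι : Type*} [Fintype ι] [DecidableEq ι]
    {M : ι → Type*} [∀ i, AddCommGroup (M i)] [∀ i, Module R (M i)] {κ : ι → Type*}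
    [∀ i, Fintype (κ i)] (r : ∀ i, κ i → R) (x : ∀ i, κ i → M i) :
    (⨂ₜ[R] i, ∑ v, r i v • x i v) = ∑ v : ∀ i, κ i, (∏ i, r i (v i)) • ⨂ₜ[R] i, x i (v i) := by
  rw [MultilinearMap.map_sum]
  simp_rw [MultilinearMap.map_smul_univ]

namespace CellDatum

variable {R : Type*} [CommRing R] {ι : Type*}
  {A : ι → Type*} [∀ i, Ring (A i)] [∀ i, Algebra R (A i)]
  {Γ : ι → Type*} [∀ i, PartialOrder (Γ i)] {T : ∀ i, Γ i → Type*} [∀ i γ, Fintype (T i γ)]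
  (D : ∀ i, CellDatum R (A i) (Γ i) (T i))

noncomputable def tensorStar : (⨂[R] i, A i) →ₗ[R] ⨂[R] i, A i :=
  PiTensorProduct.map fun i => (D i).star

theorem tensorStar_tprod (a : ∀ i, A i) :
    tensorStar D (⨂ₜ[R] i, a i) = ⨂ₜ[R] i, (D i).star (a i) :=
  map_tprod _ _

theorem tensorStar_mul (a b : ⨂[R] i, A i) :
    tensorStar D (a * b) = tensorStar D b * tensorStar D a := by
  induction a using PiTensorProduct.induction_on with
  | smul_tprod r f =>
    induction b using PiTensorProduct.induction_on with
    | smul_tprod r' g =>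
      simp only [smul_mul_smul_comm, tprod_mul_tprod, map_smul, tensorStar_tprod, Pi.mul_apply,
        CellDatum.star_mul, mul_comm r r']
      rfl
    | add x y hx hy => simp only [mul_add, add_mul, map_add, hx, hy]
  | add x y hx hy => simp only [mul_add, add_mul, map_add, hx, hy]

theorem tensorStar_tensorStar (a : ⨂[R] i, A i) : tensorStar D (tensorStar D a) = a := by
  induction a using PiTensorProduct.induction_on with
  | smul_tprod r f => simp only [map_smul, tensorStar_tprod, CellDatum.star_star]
  | add x y hx hy => rw [map_add, map_add, hx, hy]

def tensorAbar (γ : ∀ i, Γ i) : Submodule R (⨂[R] i, A i) :=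
  Submodule.span R {x | ∃ μ, γ < μ ∧ ∃ u w : ∀ i, T i (μ i),
    x = ⨂ₜ[R] i, (D i).c (μ i) (u i) (w i)}

variable [Fintype ι]

def piCellIndexEquiv :
    (∀ i, Σ γ : Γ i, T i γ × T i γ) ≃ Σ γ : ∀ i, Γ i, (∀ i, T i (γ i)) × (∀ i, T i (γ i)) where
  toFun p := ⟨fun i => (p i).1, fun i => (p i).2.1, fun i => (p i).2.2⟩
  invFun q i := ⟨q.1 i, q.2.1 i, q.2.2 i⟩
  left_inv _ := rfl
  right_inv _ := rfl

noncomputable def tensorBasis :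
    Basis (Σ γ : ∀ i, Γ i, (∀ i, T i (γ i)) × (∀ i, T i (γ i))) R (⨂[R] i, A i) :=
  (Basis.piTensorProduct fun i => (D i).basis).reindex piCellIndexEquiv

theorem tensorBasis_apply (γ : ∀ i, Γ i) (s t : ∀ i, T i (γ i)) :
    tensorBasis D ⟨γ, s, t⟩ = ⨂ₜ[R] i, (D i).c (γ i) (s i) (t i) := by
  simp [tensorBasis, piCellIndexEquiv, basis_apply]

theorem coe_tensorBasis :
    ⇑(tensorBasis D) = fun p => ⨂ₜ[R] i, (D i).c (p.1 i) (p.2.1 i) (p.2.2 i) :=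
  funext fun ⟨γ, s, t⟩ => tensorBasis_apply D γ s t

theorem tensorBasis_repr_tprod (x : ∀ i, A i)
    (p : Σ γ : ∀ i, Γ i, (∀ i, T i (γ i)) × (∀ i, T i (γ i))) :
    (tensorBasis D).repr (tprod R x) p = ∏ i, (D i).basis.repr (x i) ⟨p.1 i, p.2.1 i, p.2.2 i⟩ := by
  rw [tensorBasis, Basis.repr_reindex_apply, Basis.piTensorProduct_repr_tprod_apply]
  rfl

theorem tprod_sub_tprod_mem_tensorAbar (γ : ∀ i, Γ i) (z y : ∀ i, A i)
    (hy : ∀ i, y i ∈ (D i).Aup (γ i)) (hzy : ∀ i, z i - y i ∈ (D i).Abar (γ i)) :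
    tprod R z - tprod R y ∈ tensorAbar D γ := by
  rw [tensorAbar, mem_span_cells_iff (tensorBasis D) _ (tensorBasis_apply D)]
  -- A cell `μ` with `¬ γ < μ` is either not above `γ`, where both products vanish, or is `γ`
  -- itself, where the factors of the two products agree.
  rintro ⟨μ, u, w⟩ (hμ : ¬ γ < μ)
  have hy0 : ∀ i, ¬ γ i ≤ μ i → (D i).basis.repr (y i) ⟨μ i, u i, w i⟩ = 0 := fun i =>
    (D i).mem_Aup_iff.mp (hy i) ⟨μ i, u i, w i⟩
  have hzy0 : ∀ i, ¬ γ i < μ i →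
      (D i).basis.repr (z i) ⟨μ i, u i, w i⟩ = (D i).basis.repr (y i) ⟨μ i, u i, w i⟩ :=
    fun i h => by simpa [sub_eq_zero] using (D i).mem_Abar_iff.mp (hzy i) _ h
  rw [map_sub, Finsupp.sub_apply, tensorBasis_repr_tprod, tensorBasis_repr_tprod, sub_eq_zero]
  by_cases hle : γ ≤ μ
  · obtain rfl : γ = μ := eq_of_le_of_not_lt hle hμ
    exact Finset.prod_congr rfl fun i _ => hzy0 i (lt_irrefl _)
  · obtain ⟨i, hi⟩ : ∃ i, ¬ γ i ≤ μ i := by simpa [Pi.le_def] using hle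
    rw [Finset.prod_eq_zero (Finset.mem_univ i) ((hzy0 i fun h => hi h.le).trans (hy0 i hi)),
      Finset.prod_eq_zero (Finset.mem_univ i) (hy0 i hi)]

variable [DecidableEq ι]

theorem tprod_mul_sub_sum_mem_tensorAbar (γ : ∀ i, Γ i) (s : ∀ i, T i (γ i)) (f : ∀ i, A i)
    (r : ∀ i, T i (γ i) → R)
    (hr : ∀ i t, f i * (D i).c (γ i) (s i) t - ∑ v, r i v • (D i).c (γ i) v t ∈ (D i).Abar (γ i))
    (t : ∀ i, T i (γ i)) :
    tprod R f * (⨂ₜ[R] i, (D i).c (γ i) (s i) (t i)) -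
      ∑ v : ∀ i, T i (γ i), (∏ i, r i (v i)) • (⨂ₜ[R] i, (D i).c (γ i) (v i) (t i)) ∈
      tensorAbar D γ := by
  rw [tprod_mul_tprod, ← tprod_sum_smul r fun i v => (D i).c (γ i) v (t i)]
  refine tprod_sub_tprod_mem_tensorAbar D γ _ _ (fun i => ?_) fun i => hr i (t i)
  exact Submodule.sum_mem _ fun v _ =>
    Submodule.smul_mem _ _ (Submodule.subset_span ⟨γ i, le_rfl, v, t i, rfl⟩)

noncomputable def piTensor :
    CellDatum R (⨂[R] i, A i) (∀ i, Γ i) (fun γ => ∀ i, T i (γ i)) where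
  star := tensorStar D
  star_mul := tensorStar_mul D
  star_star := tensorStar_tensorStar D
  c γ s t := ⨂ₜ[R] i, (D i).c (γ i) (s i) (t i)
  indep := by
    have := (tensorBasis D).linearIndependent
    rwa [coe_tensorBasis] at this
  span_top := by
    have := (tensorBasis D).span_eq
    rwa [coe_tensorBasis] at this
  mult γ s := by
    refine exists_coeff_of_span_eq_top span_tprod_eq_top _ _ _ ?_
    rintro _ ⟨f, rfl⟩
    choose r hr using fun i => (D i).mult (γ i) (s i) (f i)
    exact ⟨_, tprod_mul_sub_sum_mem_tensorAbar D γ s f r hr⟩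
  star_c γ s t := by
    rw [tensorStar_tprod]
    exact tprod_sub_tprod_mem_tensorAbar D γ _ _
      (fun i => Submodule.subset_span ⟨γ i, le_rfl, t i, s i, rfl⟩) fun i => (D i).star_c _ _ _

end CellDatum

section CellModules

variable {R : Type*} [CommRing R] {ι : Type*}
  {A : ι → Type*} [∀ i, Ring (A i)] [∀ i, Algebra R (A i)]
  {M : ι → Type*} [∀ i, AddCommGroup (M i)] [∀ i, Module R (M i)] [∀ i, Module (A i) (M i)]
  {N : Type*} [AddCommGroup N] [Module R N] [Module (⨂[R] i, A i) N]
  [IsScalarTower R (⨂[R] i, A i) N] (φ : (⨂[R] i, M i) ≃ₗ[R] N)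
  (hφ : ∀ (a : ∀ i, A i) (m : ∀ i, M i),
    (⨂ₜ[R] i, a i) • φ (⨂ₜ[R] i, m i) = φ (⨂ₜ[R] i, a i • m i))
include hφ

theorem span_singleton_tprod_eq_top {m : ∀ i, M i} (hm : ∀ i, Submodule.span (A i) {m i} = ⊤) :
    Submodule.span (⨂[R] i, A i) {φ (⨂ₜ[R] i, m i)} = ⊤ := by
  let C := (Submodule.span (⨂[R] i, A i) {φ (⨂ₜ[R] i, m i)}).restrictScalars R
  have hC : ⊤ ≤ C.comap φ.toLinearMap := by
    rw [← span_tprod_eq_top, Submodule.span_le]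
    rintro _ ⟨x, rfl⟩
    have hx : ∀ i, ∃ a : A i, a • m i = x i := fun i =>
      Submodule.mem_span_singleton.mp (hm i ▸ Submodule.mem_top)
    choose a ha using hx
    change φ (tprod R x) ∈ Submodule.span _ _
    rw [← funext ha, ← hφ]
    exact Submodule.smul_mem _ _ (Submodule.mem_span_singleton_self _)
  refine eq_top_iff.mpr fun n _ => ?_
  have := hC (Submodule.mem_top (x := φ.symm n))
  rwa [Submodule.mem_comap, LinearEquiv.coe_coe, LinearEquiv.apply_symm_apply] at this

variable [Fintype ι] [DecidableEq ι] [∀ i, IsScalarTower R (A i) (M i)]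

theorem CellDatum.isCellModule_piTensor {Γ : ι → Type*} [∀ i, PartialOrder (Γ i)]
    {T : ∀ i, Γ i → Type*} [∀ i γ, Fintype (T i γ)] (D : ∀ i, CellDatum R (A i) (Γ i) (T i))
    {γ : ∀ i, Γ i} {e : ∀ i, T i (γ i) → M i}
    (he : ∀ i, IsCellModule (D i) (γ i) (M i) (e i)) :
    IsCellModule (piTensor D) γ N fun s => φ (⨂ₜ[R] i, e i (s i)) := by
  let b := (Basis.piTensorProduct fun i => Basis.mk (he i).1 (he i).2.1.ge).map φ
  have hb : ⇑b = fun s => φ (⨂ₜ[R] i, e i (s i)) := by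
    funext s
    simp [b, Basis.mk_apply]
  refine isCellModule_of_span _ (hb ▸ b.linearIndependent) (hb ▸ b.span_eq) span_tprod_eq_top ?_
  rintro _ ⟨f, rfl⟩ s
  choose r hr using fun i => (D i).mult (γ i) (s i) (f i)
  refine ⟨_, tprod_mul_sub_sum_mem_tensorAbar D γ s f r hr, ?_⟩
  rw [hφ, funext fun i => (he i).2.2 (f i) (s i) (r i) (hr i), tprod_sum_smul, map_sum]
  simp only [map_smul]

end CellModules

theorem stmt_7_general {R : Type*} [CommRing R] {K : ℕ}
    (A : Fin K → Type*) [∀ i, Ring (A i)] [∀ i, Algebra R (A i)]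
    (Γ : Fin K → Type*) [∀ i, PartialOrder (Γ i)]
    (T : ∀ i, Γ i → Type*) [∀ i γ, Fintype (T i γ)]
    (D : ∀ i, CellDatum R (A i) (Γ i) (T i))
    (M : ∀ i, Γ i → Type*) [∀ i γ, AddCommGroup (M i γ)] [∀ i γ, Module R (M i γ)]
    [∀ i γ, Module (A i) (M i γ)] [∀ i γ, IsScalarTower R (A i) (M i γ)]
    (e : ∀ i γ, T i γ → M i γ)
    (hM : ∀ i γ, IsCellModule (D i) γ (M i γ) (e i γ)) :
    ∃ D' : CellDatum R (⨂[R] i, A i) (∀ i, Γ i) (fun γ => ∀ i, T i (γ i)),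
      (∀ (γ : ∀ i, Γ i) (s t : ∀ i, T i (γ i)),
        D'.c γ s t = ⨂ₜ[R] i, (D i).c (γ i) (s i) (t i)) ∧
      (∀ a : ∀ i, A i, D'.star (⨂ₜ[R] i, a i) = ⨂ₜ[R] i, (D i).star (a i)) ∧
      (∀ (γ : ∀ i, Γ i) (N : Type*) [AddCommGroup N] [Module R N]
        [Module (⨂[R] i, A i) N] [IsScalarTower R (⨂[R] i, A i) N]
        (φ : (⨂[R] i, M i (γ i)) ≃ₗ[R] N),
        (∀ (a : ∀ i, A i) (m : ∀ i, M i (γ i)),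
          (⨂ₜ[R] i, a i) • φ (⨂ₜ[R] i, m i) = φ (⨂ₜ[R] i, a i • m i)) →
        IsCellModule D' γ N (fun s => φ (⨂ₜ[R] i, e i (γ i) (s i))) ∧
        ((∀ j (γ' : Γ j), ∃ m : M j γ', Submodule.span (A j) {m} = ⊤) →
          ∃ nn : N, Submodule.span (⨂[R] i, A i) {nn} = ⊤)) := by
  refine ⟨CellDatum.piTensor D, fun _ _ _ => rfl, CellDatum.tensorStar_tprod D,
    fun γ N _ _ _ _ φ hφ => ⟨CellDatum.isCellModule_piTensor φ hφ D fun i => hM i (γ i),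
      fun hcyclic => ?_⟩⟩
  choose m hm using fun i => hcyclic i (γ i)
  exact ⟨_, span_singleton_tprod_eq_top φ hφ hm⟩

/-- A finite tensor product `A₁ ⊗_R ⋯ ⊗_R A_K` of cellular algebras is
cellular, with involution the tensor product of the involutions, poset the product poset,
index sets the products of index sets, and cellular basis the simple tensors of cellular
basis elements.  The cell modules are the tensor products of the cell modules (any module `N`
realizing this tensor product of cell modules is a cell module for the tensor product cell
datum), and if each factor is cyclic cellular then so is the tensor product. -/
theorem stmt_7 {R : Type*} [CommRing R] [IsDomain R] {K : ℕ}
    (A : Fin K → Type*) [∀ i, Ring (A i)] [∀ i, Algebra R (A i)]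
    (Γ : Fin K → Type*) [∀ i, PartialOrder (Γ i)]
    (T : ∀ i, Γ i → Type*) [∀ i γ, Fintype (T i γ)]
    (D : ∀ i, CellDatum R (A i) (Γ i) (T i))
    (M : ∀ i, Γ i → Type*) [∀ i γ, AddCommGroup (M i γ)] [∀ i γ, Module R (M i γ)]
    [∀ i γ, Module (A i) (M i γ)] [∀ i γ, IsScalarTower R (A i) (M i γ)]
    (e : ∀ i γ, T i γ → M i γ)
    (hM : ∀ i γ, IsCellModule (D i) γ (M i γ) (e i γ)) :
    ∃ D' : CellDatum R (⨂[R] i, A i) (∀ i, Γ i) (fun γ => ∀ i, T i (γ i)),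
      (∀ (γ : ∀ i, Γ i) (s t : ∀ i, T i (γ i)),
        D'.c γ s t = ⨂ₜ[R] i, (D i).c (γ i) (s i) (t i)) ∧
      (∀ a : ∀ i, A i, D'.star (⨂ₜ[R] i, a i) = ⨂ₜ[R] i, (D i).star (a i)) ∧
      (∀ (γ : ∀ i, Γ i) (N : Type*) [AddCommGroup N] [Module R N]
        [Module (⨂[R] i, A i) N] [IsScalarTower R (⨂[R] i, A i) N]
        (φ : (⨂[R] i, M i (γ i)) ≃ₗ[R] N),
        (∀ (a : ∀ i, A i) (m : ∀ i, M i (γ i)),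
          (⨂ₜ[R] i, a i) • φ (⨂ₜ[R] i, m i) = φ (⨂ₜ[R] i, a i • m i)) →
        IsCellModule D' γ N (fun s => φ (⨂ₜ[R] i, e i (γ i) (s i))) ∧
        ((∀ j (γ' : Γ j), ∃ m : M j γ', Submodule.span (A j) {m} = ⊤) →
          ∃ nn : N, Submodule.span (⨂[R] i, A i) {nn} = ⊤)) :=
  stmt_7_general A Γ T D M e hM
end

section
/- If B is a semisimple algebra over a field of characteristic zero and G is a finite group acting on B by algebra automorphisms, then the crossed product algebra B ⋊ G is semisimple. -/
/-! Relative Maschke argument. In `C` the elements `ψ b = b ⊗ 1` form a copy of `B`, the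
elements `u g = 1 ⊗ g` form a copy of `G` normalizing it (`u g * ψ b = ψ (g • b) * u g`), and the
products `ψ b * u g` span `C` additively. Given a `C`-submodule `N` of a `C`-module `M`,
semisimplicity of `B` provides a `B`-linear projection `π` of `M` onto `N`. The average
`m ↦ |G|⁻¹ ∑ g, u g • π (u g⁻¹ • m)` is still a `B`-linear projection onto `N` (this uses that
`u g⁻¹` normalizes `ψ B`) and commutes with every `u h` by reindexing, so it is `C`-linear; its
kernel is a `C`-complement of `N`. Division by `|G|` is where characteristic zero enters. -/

open scoped TensorProduct

section Averaging

variable {B C G M : Type*} [Semiring B] [Semiring C] [Group G] [Fintype G]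
  [Invertible (Fintype.card G : C)] [AddCommMonoid M] [Module C M]

def conjAverage (u : G →* C) (π : M →+ M) : M →+ M where
  toFun m := ⅟(Fintype.card G : C) • ∑ g, u g • π (u g⁻¹ • m)
  map_zero' := by simp
  map_add' m m' := by simp only [smul_add, map_add, Finset.sum_add_distrib]

variable (u : G →* C) (π : M →+ M)

theorem conjAverage_apply (m : M) :
    conjAverage u π m = ⅟(Fintype.card G : C) • ∑ g, u g • π (u g⁻¹ • m) := rfl

theorem conjAverage_map_smul_of_sum_eq {c : C} {m : M}
    (h : ∑ g, u g • π (u g⁻¹ • c • m) = c • ∑ g, u g • π (u g⁻¹ • m)) :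
    conjAverage u π (c • m) = c • conjAverage u π m := by
  rw [conjAverage_apply, conjAverage_apply, h, smul_smul, smul_smul,
    (Commute.invOf_right (Nat.cast_commute _ c).symm).eq]

theorem conjAverage_map_smul_group (h : G) (m : M) :
    conjAverage u π (u h • m) = u h • conjAverage u π m := by
  refine conjAverage_map_smul_of_sum_eq u π ?_
  rw [Finset.smul_sum]
  refine Fintype.sum_equiv (Equiv.mulLeft h⁻¹) _ _ fun g => ?_
  simp only [Equiv.coe_mulLeft, smul_smul, ← map_mul, mul_inv_rev, inv_inv, mul_inv_cancel_left]

theorem conjAverage_map_smul_base (ψ : B →+* C)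
    (hconj : ∀ g b, ∃ b', u g * ψ b = ψ b' * u g)
    (hπ : ∀ b m, π (ψ b • m) = ψ b • π m) (b : B) (m : M) :
    conjAverage u π (ψ b • m) = ψ b • conjAverage u π m := by
  refine conjAverage_map_smul_of_sum_eq u π ?_
  rw [Finset.smul_sum]
  refine Fintype.sum_congr _ _ fun g => ?_
  obtain ⟨b', hb'⟩ := hconj g⁻¹ b
  have hunit : u g⁻¹ * u g = 1 := by rw [← map_mul, inv_mul_cancel, map_one]
  have hb : u g * ψ b' = ψ b * u g :=
    calc u g * ψ b' = u g * (ψ b' * u g⁻¹) * u g := by simp only [mul_assoc, hunit, mul_one]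
      _ = ψ b * u g := by rw [← hb', ← mul_assoc, ← map_mul, mul_inv_cancel, map_one, one_mul]
  rw [smul_smul, ← mul_smul, hb', mul_smul, hπ, smul_smul, hb, mul_smul]

theorem conjAverage_map_smul (ψ : B →+* C)
    (hconj : ∀ g b, ∃ b', u g * ψ b = ψ b' * u g)
    (hspan : AddSubmonoid.closure (Set.range fun p : B × G => ψ p.1 * u p.2) = ⊤)
    (hπ : ∀ b m, π (ψ b • m) = ψ b • π m) (c : C) (m : M) :
    conjAverage u π (c • m) = c • conjAverage u π m := by
  induction (hspan ▸ AddSubmonoid.mem_top c : c ∈ AddSubmonoid.closure _)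
    using AddSubmonoid.closure_induction generalizing m with
  | mem _ h =>
    obtain ⟨⟨b, g⟩, rfl⟩ := h
    rw [mul_smul, conjAverage_map_smul_base u π ψ hconj hπ, conjAverage_map_smul_group, mul_smul]
  | zero => rw [zero_smul, map_zero, zero_smul]
  | add c c' _ _ hc hc' => rw [add_smul, map_add, hc, hc', add_smul]

theorem conjAverage_mem (N : Submodule C M) (hπ : ∀ m, π m ∈ N) (m : M) :
    conjAverage u π m ∈ N :=
  N.smul_mem _ (N.sum_mem fun _ _ => N.smul_mem _ (hπ _))

theorem conjAverage_eq_self (N : Submodule C M) (hπ : ∀ m ∈ N, π m = m) {m : M} (hm : m ∈ N) :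
    conjAverage u π m = m := by
  have hterm : ∀ g, u g • π (u g⁻¹ • m) = m := fun g => by
    rw [hπ _ (N.smul_mem _ hm), smul_smul, ← map_mul, mul_inv_cancel, map_one, one_smul]
  simp only [conjAverage_apply, hterm, Finset.sum_const, Finset.card_univ,
    ← Nat.cast_smul_eq_nsmul C, smul_smul, invOf_mul_self, one_smul]

end Averaging

theorem IsSemisimpleModule.of_isSemisimpleModule_restrict {B C G M : Type*} [Ring B] [Ring C]
    [Group G] [Fintype G] [Invertible (Fintype.card G : C)] [AddCommGroup M] [Module B M]
    [Module C M] [IsSemisimpleModule B M] (ψ : B →+* C) (u : G →* C)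
    (hconj : ∀ g b, ∃ b', u g * ψ b = ψ b' * u g)
    (hspan : AddSubmonoid.closure (Set.range fun p : B × G => ψ p.1 * u p.2) = ⊤)
    (hsmul : ∀ (b : B) (m : M), b • m = ψ b • m) :
    IsSemisimpleModule C M := by
  refine { exists_isCompl := fun N => ?_ }
  let N' : Submodule B M :=
    { N.toAddSubmonoid with
      smul_mem' := fun b m hm => by rw [hsmul]; exact N.smul_mem _ hm }
  obtain ⟨Q, hQ⟩ := exists_isCompl N'
  let π : M →+ M := (N'.projection Q hQ).toAddMonoidHom
  have hπ : ∀ b m, π (ψ b • m) = ψ b • π m := fun b m => by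
    simp only [π, ← hsmul, LinearMap.toAddMonoidHom_coe, map_smul]
  let P : M →ₗ[C] N := LinearMap.codRestrict N
    { toFun := conjAverage u π
      map_add' := map_add _
      map_smul' := conjAverage_map_smul u π ψ hconj hspan hπ }
    (conjAverage_mem u π N fun m => N'.projection_apply_mem hQ m)
  exact ⟨_, LinearMap.isCompl_of_proj (f := P) fun n =>
    Subtype.ext (conjAverage_eq_self u π N (fun m hm => N'.projection_apply_of_mem_left hQ hm) n.2)⟩

theorem TensorProduct.closure_range_tmul_single_eq_top {K M G : Type*} [CommSemiring K]
    [AddCommMonoid M] [Module K M] :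
    AddSubmonoid.closure (Set.range fun p : M × G => p.1 ⊗ₜ[K] MonoidAlgebra.single p.2 (1 : K))
      = ⊤ := by
  refine (AddSubmonoid.eq_top_iff' _).2 fun x => ?_
  induction x using TensorProduct.induction_on with
  | zero => exact zero_mem _
  | tmul m f =>
    induction f using MonoidAlgebra.induction_linear with
    | zero => rw [tmul_zero]; exact zero_mem _
    | add f f' hf hf' => rw [tmul_add]; exact add_mem hf hf'
    | single g k =>
      rw [← mul_one k, ← MonoidAlgebra.smul_single', ← smul_tmul]
      exact AddSubmonoid.subset_closure ⟨(k • m, g), rfl⟩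
  | add x y hx hy => exact add_mem hx hy

theorem LinearEquiv.closure_range_apply_tmul_single_eq_top {K B G C : Type*} [CommSemiring K]
    [AddCommMonoid B] [Module K B] [AddCommMonoid C] [Module K C]
    (φ : (B ⊗[K] MonoidAlgebra K G) ≃ₗ[K] C) :
    AddSubmonoid.closure (Set.range fun p : B × G => φ (p.1 ⊗ₜ[K] MonoidAlgebra.single p.2 1))
      = ⊤ := by
  rw [Set.range_comp', ← AddMonoidHom.map_mclosure, TensorProduct.closure_range_tmul_single_eq_top,
    ← AddMonoidHom.mrange_eq_map, AddMonoidHom.mrange_eq_top]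
  exact φ.surjective

/-- `φ` identifies `C` with the crossed product `B ⋊ G`, `b ⊗ g` corresponding to `b * g`. -/
def IsCrossedProductEquiv {K B G C : Type*} [CommSemiring K] [Semiring B] [Algebra K B] [Monoid G]
    [Semiring C] [Module K C] (ρ : G →* (B ≃ₐ[K] B)) (φ : (B ⊗[K] MonoidAlgebra K G) ≃ₗ[K] C) :
    Prop :=
  ∀ (b b' : B) (g g' : G),
    φ (b ⊗ₜ[K] MonoidAlgebra.single g (1 : K)) * φ (b' ⊗ₜ[K] MonoidAlgebra.single g' (1 : K))
      = φ ((b * ρ g b') ⊗ₜ[K] MonoidAlgebra.single (g * g') (1 : K))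

namespace IsCrossedProductEquiv

variable {K B G C : Type*} [CommSemiring K] [Semiring B] [Algebra K B] [Monoid G]
  [Semiring C] [Module K C] {ρ : G →* (B ≃ₐ[K] B)} {φ : (B ⊗[K] MonoidAlgebra K G) ≃ₗ[K] C}

theorem apply_one_tmul_single_one (hφ : IsCrossedProductEquiv ρ φ) :
    φ (1 ⊗ₜ MonoidAlgebra.single 1 1) = 1 := by
  have hleft : ∀ x : C, φ (1 ⊗ₜ MonoidAlgebra.single 1 1) * x = x := fun x => by
    have hx : x ∈ AddSubmonoid.closure _ :=
      φ.closure_range_apply_tmul_single_eq_top ▸ AddSubmonoid.mem_top x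
    induction hx using AddSubmonoid.closure_induction with
    | mem _ h =>
      obtain ⟨⟨b, g⟩, rfl⟩ := h
      rw [hφ, map_one, AlgEquiv.one_apply, one_mul, one_mul]
    | zero => rw [mul_zero]
    | add x y _ _ hx hy => rw [mul_add, hx, hy]
  exact (mul_one _).symm.trans (hleft 1)

noncomputable def baseHom (hφ : IsCrossedProductEquiv ρ φ) : B →+* C where
  toFun b := φ (b ⊗ₜ MonoidAlgebra.single 1 1)
  map_one' := hφ.apply_one_tmul_single_one
  map_mul' b b' := by rw [hφ, map_one, AlgEquiv.one_apply, one_mul]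
  map_zero' := by rw [TensorProduct.zero_tmul, map_zero]
  map_add' b b' := by rw [TensorProduct.add_tmul, map_add]

noncomputable def groupHom (hφ : IsCrossedProductEquiv ρ φ) : G →* C where
  toFun g := φ (1 ⊗ₜ MonoidAlgebra.single g 1)
  map_one' := hφ.apply_one_tmul_single_one
  map_mul' g g' := by rw [hφ, map_one, one_mul]

theorem baseHom_apply (hφ : IsCrossedProductEquiv ρ φ) (b : B) :
    hφ.baseHom b = φ (b ⊗ₜ MonoidAlgebra.single 1 1) := rfl

theorem groupHom_apply (hφ : IsCrossedProductEquiv ρ φ) (g : G) :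
    hφ.groupHom g = φ (1 ⊗ₜ MonoidAlgebra.single g 1) := rfl

theorem baseHom_mul_groupHom (hφ : IsCrossedProductEquiv ρ φ) (b : B) (g : G) :
    hφ.baseHom b * hφ.groupHom g = φ (b ⊗ₜ MonoidAlgebra.single g 1) := by
  rw [baseHom_apply, groupHom_apply, hφ, map_one, mul_one, one_mul]

theorem groupHom_mul_baseHom (hφ : IsCrossedProductEquiv ρ φ) (g : G) (b : B) :
    hφ.groupHom g * hφ.baseHom b = hφ.baseHom (ρ g b) * hφ.groupHom g := by
  rw [baseHom_mul_groupHom, baseHom_apply, groupHom_apply, hφ, mul_one, one_mul]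

end IsCrossedProductEquiv

theorem stmt_8_general {K : Type*} [Field K] [CharZero K]
    {B : Type*} [Ring B] [Algebra K B] [IsSemisimpleRing B]
    {G : Type*} [Group G] [Finite G] (ρ : G →* (B ≃ₐ[K] B))
    (C : Type*) [Ring C] [Algebra K C]
    (φ : (B ⊗[K] MonoidAlgebra K G) ≃ₗ[K] C)
    (hφ : ∀ (b b' : B) (g g' : G),
      φ (b ⊗ₜ[K] MonoidAlgebra.single g (1 : K)) * φ (b' ⊗ₜ[K] MonoidAlgebra.single g' (1 : K))
        = φ ((b * ρ g b') ⊗ₜ[K] MonoidAlgebra.single (g * g') (1 : K))) :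
    IsSemisimpleRing C := by
  have hC : IsCrossedProductEquiv ρ φ := hφ
  have : Fintype G := Fintype.ofFinite G
  have : Invertible (Fintype.card G : C) := IsScalarTower.invertibleAlgebraCoeNat K C _
  let _ : Module B C := Module.compHom C hC.baseHom
  exact IsSemisimpleModule.of_isSemisimpleModule_restrict hC.baseHom hC.groupHom
    (fun g b => ⟨ρ g b, hC.groupHom_mul_baseHom g b⟩)
    (by simpa only [hC.baseHom_mul_groupHom] using φ.closure_range_apply_tmul_single_eq_top)
    (fun _ _ => rfl)

/-- If `B` is a (finite-dimensional) semisimple algebra over a field `K` of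
characteristic zero and `G` is a finite group acting on `B` by `K`-algebra automorphisms, then
the crossed product algebra `B ⋊ G` is semisimple.  The crossed product is axiomatized as any
`K`-algebra `C` which is linearly isomorphic to `B ⊗[K] K[G]` with multiplication given on pure
tensors by `(b ⊗ g)(b' ⊗ g') = (b * g • b') ⊗ gg'`. -/
theorem stmt_8 {K : Type*} [Field K] [CharZero K]
    {B : Type*} [Ring B] [Algebra K B] [FiniteDimensional K B] [IsSemisimpleRing B]
    {G : Type*} [Group G] [Finite G] (ρ : G →* (B ≃ₐ[K] B))
    (C : Type*) [Ring C] [Algebra K C]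
    (φ : (B ⊗[K] MonoidAlgebra K G) ≃ₗ[K] C)
    (hφ : ∀ (b b' : B) (g g' : G),
      φ (b ⊗ₜ[K] MonoidAlgebra.single g (1 : K)) * φ (b' ⊗ₜ[K] MonoidAlgebra.single g' (1 : K))
        = φ ((b * ρ g b') ⊗ₜ[K] MonoidAlgebra.single (g * g') (1 : K))) :
    IsSemisimpleRing C :=
  stmt_8_general ρ C φ hφ
end

section
/- Let Γ be a finite poset and let λ ∈ Λ_n^Γ be a multipartition that is maximal with respect to Γ-dominance order ⊵_Γ. Then for every non-maximal element γ of Γ, the partition λ(γ) is empty. -/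
def compSize (c : ℕ →₀ ℕ) : ℕ := c.sum fun _ m => m

/-- `Γ`-dominance order on multicompositions indexed by a finite poset `Γ`. -/
def GammaDom {Γ : Type*} [PartialOrder Γ] [Fintype Γ]
    [DecidableRel ((· < ·) : Γ → Γ → Prop)] (lam mu : Γ → (ℕ →₀ ℕ)) : Prop :=
  ∀ (γ : Γ) (j : ℕ),
    (∑ γ' ∈ Finset.univ.filter (fun γ' => γ < γ'), compSize (mu γ'))
        + ∑ i ∈ Finset.range j, mu γ i
      ≤ (∑ γ' ∈ Finset.univ.filter (fun γ' => γ < γ'), compSize (lam γ'))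
        + ∑ i ∈ Finset.range j, lam γ i

lemma partial_le_compSize (c : ℕ →₀ ℕ) (j : ℕ) :
    ∑ i ∈ Finset.range j, c i ≤ compSize c := by
  classical
  have h1 : ∑ i ∈ Finset.range j, c i ≤ ∑ i ∈ Finset.range j ∪ c.support, c i :=
    Finset.sum_le_sum_of_subset Finset.subset_union_left
  have h2 : ∑ i ∈ Finset.range j ∪ c.support, c i = ∑ i ∈ c.support, c i := by
    refine (Finset.sum_subset Finset.subset_union_right ?_).symm
    intro x _ hx
    exact Finsupp.notMem_support_iff.mp hx
  rw [h2] at h1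
  exact h1

lemma compSize_eq_zero_iff (c : ℕ →₀ ℕ) (h : compSize c = 0) : c = 0 := by
  classical
  have := Finset.sum_eq_zero_iff.mp h
  ext i
  by_cases hi : i ∈ c.support
  · exact this i hi
  · simpa using Finsupp.notMem_support_iff.mp hi

lemma compSize_single (M : ℕ) : compSize (Finsupp.single 0 M) = M := by
  simp [compSize, Finsupp.sum_single_index]

/-- If `λ ∈ Λ_n^Γ` is a multipartition which is maximal with respect to
`Γ`-dominance order, then `λ(γ)` is the empty partition for every non-maximal `γ ∈ Γ`. -/
theorem stmt_12 {Γ : Type*} [PartialOrder Γ] [Fintype Γ]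
    [DecidableRel ((· < ·) : Γ → Γ → Prop)]
    (n : ℕ) (lam : Γ → (ℕ →₀ ℕ))
    (hpart : ∀ γ : Γ, ∀ i j : ℕ, i ≤ j → lam γ j ≤ lam γ i)
    (hsize : ∑ γ : Γ, compSize (lam γ) = n)
    (hmax : ∀ mu : Γ → (ℕ →₀ ℕ), (∀ γ : Γ, ∀ i j : ℕ, i ≤ j → mu γ j ≤ mu γ i) →
      (∑ γ : Γ, compSize (mu γ) = n) → GammaDom mu lam → GammaDom lam mu) :
    ∀ γ : Γ, ¬ IsMax γ → lam γ = 0 := by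
  classical
  intro γ hγ
  rw [not_isMax_iff] at hγ
  obtain ⟨δ, hlt⟩ := hγ
  set c := compSize (lam γ) with hc
  set M := compSize (lam δ) + c with hM
  set mu : Γ → (ℕ →₀ ℕ) :=
    fun β => if β = γ then 0 else if β = δ then Finsupp.single 0 M else lam β with hmu
  have hne : γ ≠ δ := ne_of_lt hlt
  -- key pointwise identity
  have key : ∀ β, compSize (mu β) + (if β = γ then c else 0)
      = compSize (lam β) + (if β = δ then c else 0) := by
    intro β
    by_cases h1 : β = γ
    · have h2 : β ≠ δ := by rw [h1]; exact hne
      have h0 : mu β = 0 := by simp [hmu, h1]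
      rw [h0, if_pos h1, if_neg h2, h1]
      simp only [compSize, Finsupp.sum_zero_index, zero_add, add_zero]
      exact hc
    · by_cases h2 : β = δ
      · have h0 : mu β = Finsupp.single 0 M := by simp [hmu, h1, h2, Ne.symm hne]
        rw [h0, compSize_single, if_neg h1, if_pos h2, h2]
        omega
      · have h0 : mu β = lam β := by simp [hmu, h1, h2]
        rw [h0, if_neg h1, if_neg h2]
  -- summed identity
  have hS : ∀ S : Finset Γ,
      (∑ β ∈ S, compSize (mu β)) + (if γ ∈ S then c else 0)
        = (∑ β ∈ S, compSize (lam β)) + (if δ ∈ S then c else 0) := by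
    intro S
    have := Finset.sum_congr rfl (fun β (_ : β ∈ S) => key β)
    rw [Finset.sum_add_distrib, Finset.sum_add_distrib] at this
    simpa [Finset.sum_ite_eq' S] using this
  -- mu is a multipartition of n
  have hpart' : ∀ β : Γ, ∀ i j : ℕ, i ≤ j → mu β j ≤ mu β i := by
    intro β i j hij
    by_cases h1 : β = γ
    · have h0 : mu β = 0 := by simp [hmu, h1]
      simp [h0]
    · by_cases h2 : β = δ
      · have h0 : mu β = Finsupp.single 0 M := by simp [hmu, h1, h2, Ne.symm hne]
        rw [h0]
        rcases Nat.eq_zero_or_pos j with hj | hj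
        · have hi : i = 0 := by omega
          rw [hj, hi]
        · have h3 : (Finsupp.single 0 M : ℕ →₀ ℕ) j = 0 :=
            Finsupp.single_eq_of_ne (by omega)
          rw [h3]; exact Nat.zero_le _
      · have h0 : mu β = lam β := by simp [hmu, h1, h2]
        rw [h0]
        exact hpart β i j hij
  have hsz' : ∑ β : Γ, compSize (mu β) = n := by
    have := hS Finset.univ
    simp only [Finset.mem_univ, if_true] at this
    omega
  -- mu dominates lam
  have hdom : GammaDom mu lam := by
    intro β j
    set S := Finset.univ.filter (fun β' => β < β') with hSdef
    have hSkey := hS S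
    have himp : γ ∈ S → δ ∈ S := by
      intro hg
      simp only [hSdef, Finset.mem_filter, Finset.mem_univ, true_and] at hg ⊢
      exact lt_trans hg hlt
    by_cases h1 : β = γ
    · have hγnot : γ ∉ S := by
        simp only [hSdef, Finset.mem_filter, Finset.mem_univ, true_and]
        rw [h1]; exact lt_irrefl γ
      have hδin : δ ∈ S := by
        simp only [hSdef, Finset.mem_filter, Finset.mem_univ, true_and]
        rw [h1]; exact hlt
      rw [if_pos hδin, if_neg hγnot] at hSkey
      have hmugam : mu β = 0 := by simp [hmu, h1]
      have hple : ∑ i ∈ Finset.range j, lam β i ≤ c := by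
        rw [h1]; exact partial_le_compSize _ j
      rw [hmugam]
      simp only [Finsupp.coe_zero, Pi.zero_apply, Finset.sum_const_zero, add_zero]
      omega
    · by_cases h2 : β = δ
      · have hγnot : γ ∉ S := by
          simp only [hSdef, Finset.mem_filter, Finset.mem_univ, true_and]
          rw [h2]
          exact fun h => absurd (lt_trans hlt h) (lt_irrefl γ)
        have hδnot : δ ∉ S := by
          simp only [hSdef, Finset.mem_filter, Finset.mem_univ, true_and]
          rw [h2]; exact lt_irrefl δ
        rw [if_neg hδnot, if_neg hγnot] at hSkey
        have hmuδ : mu β = Finsupp.single 0 M := by simp [hmu, h1, h2, Ne.symm hne]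
        rw [hmuδ]
        rcases Nat.eq_zero_or_pos j with hj | hj
        · rw [hj]
          simp
          omega
        · have hps : ∑ i ∈ Finset.range j, (Finsupp.single 0 M : ℕ →₀ ℕ) i = M := by
            have h4 : ∀ i, (Finsupp.single 0 M : ℕ →₀ ℕ) i = if 0 = i then M else 0 := by
              intro i; rw [Finsupp.single_apply]
            rw [Finset.sum_congr rfl fun i _ => h4 i, Finset.sum_ite_eq]
            simp [hj]
          rw [hps]
          have hple : ∑ i ∈ Finset.range j, lam β i ≤ compSize (lam δ) := by
            rw [h2]; exact partial_le_compSize _ j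
          omega
      · have hmuβ : mu β = lam β := by simp [hmu, h1, h2]
        rw [hmuβ]
        by_cases hg : γ ∈ S
        · rw [if_pos hg, if_pos (himp hg)] at hSkey
          omega
        · rw [if_neg hg] at hSkey
          by_cases hd : δ ∈ S
          · rw [if_pos hd] at hSkey; omega
          · rw [if_neg hd] at hSkey; omega
  -- apply maximality
  have hback := hmax mu hpart' hsz' hdom
  have h0 := hback γ 0
  simp only [Finset.range_zero, Finset.sum_empty, add_zero] at h0
  set S := Finset.univ.filter (fun β' => γ < β') with hSdef
  have hSkey := hS S
  have hγnot : γ ∉ S := by simp [hSdef]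
  have hδin : δ ∈ S := by simp [hSdef, hlt]
  rw [if_pos hδin, if_neg hγnot] at hSkey
  have hc0 : c = 0 := by omega
  exact compSize_eq_zero_iff _ (hc ▸ hc0)
end

section
/- Let A be a cyclic cellular algebra over an integral domain R with trivial behavior assumptions as in the wreath product construction, and let λ ∈ Λ_n^Γ be maximal in Γ-dominance order with α = α(λ). Then for every a ∈ A^{⊗n}, a·y^α lies in the R-span of {v·y^α : v ∈ V^α}, and y^α·a lies in the R-span of {y^α·v* : v ∈ V^α}. -/
open scoped TensorProduct

open PiTensorProduct

/-- `Γ`-dominance order on `Γ`-indexed multipartitions (partitions encoded as Young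
diagrams). -/
def GDomG {Γ : Type*} [PartialOrder Γ] [Fintype Γ]
    [DecidableRel ((· < ·) : Γ → Γ → Prop)] (lam mu : Γ → YoungDiagram) : Prop :=
  ∀ (γ : Γ) (j : ℕ),
    ((∑ γ' ∈ Finset.univ.filter (fun γ' => γ < γ'), (mu γ').card)
        + ∑ i ∈ Finset.range j, (mu γ).rowLen i)
      ≤ (∑ γ' ∈ Finset.univ.filter (fun γ' => γ < γ'), (lam γ').card)
        + ∑ i ∈ Finset.range j, (lam γ).rowLen i

/-- Horizontal Young diagram: one row of `m` cells. -/
def hDiag (m : ℕ) : YoungDiagram where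
  cells := {0} ×ˢ Finset.range m
  isLowerSet := by
    rintro ⟨i, j⟩ ⟨i', j'⟩ ⟨hi, hj⟩ h
    simp only [Finset.coe_product, Finset.coe_singleton, Finset.coe_range, Set.mem_prod,
      Set.mem_singleton_iff, Set.mem_Iio] at h ⊢
    omega

lemma hDiag_card (m : ℕ) : (hDiag m).card = m := by
  simp [hDiag, YoungDiagram.card]

lemma mem_hDiag {m : ℕ} {c : ℕ × ℕ} : c ∈ hDiag m ↔ c.1 = 0 ∧ c.2 < m := by
  cases c; simp [hDiag, YoungDiagram.mem_cells]; tauto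

lemma rowLen_eq_of_forall {μ : YoungDiagram} {i k : ℕ}
    (h : ∀ j, (i, j) ∈ μ ↔ j < k) : μ.rowLen i = k := by
  rcases lt_trichotomy (μ.rowLen i) k with hlt | he | hgt
  · have : (i, μ.rowLen i) ∈ μ := (h _).2 hlt
    rw [YoungDiagram.mem_iff_lt_rowLen] at this; omega
  · exact he
  · have : (i, k) ∈ μ := YoungDiagram.mem_iff_lt_rowLen.2 hgt
    rw [h] at this; omega

lemma hDiag_rowLen_zero (m : ℕ) : (hDiag m).rowLen 0 = m :=
  rowLen_eq_of_forall fun j => by simp [mem_hDiag]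

lemma hDiag_rowLen_pos (m i : ℕ) (hi : 0 < i) : (hDiag m).rowLen i = 0 :=
  rowLen_eq_of_forall fun j => by simp [mem_hDiag]; omega

lemma bot_rowLen (i : ℕ) : (⊥ : YoungDiagram).rowLen i = 0 :=
  rowLen_eq_of_forall fun j => by simp [YoungDiagram.notMem_bot]

lemma sum_rowLen_le_card (μ : YoungDiagram) (j : ℕ) :
    ∑ i ∈ Finset.range j, μ.rowLen i ≤ μ.card := by
  classical
  have h1 : ∀ i ∈ Finset.range j, μ.rowLen i = (μ.row i).card := fun i _ => μ.rowLen_eq_card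
  rw [Finset.sum_congr rfl h1, ← Finset.card_biUnion]
  · apply Finset.card_le_card
    intro c hc
    simp only [Finset.mem_biUnion] at hc
    obtain ⟨i, _, hc⟩ := hc
    exact (YoungDiagram.mem_row_iff.mp hc).1
  · intro a _ b _ hab
    simp only [Finset.disjoint_left]
    intro c hc hc'
    rw [YoungDiagram.mem_row_iff] at hc hc'
    exact hab (hc.2 ▸ hc'.2)

lemma sum_rowLen_hDiag_le (m j : ℕ) (μ : YoungDiagram) (hμ : μ.card ≤ m) :
    ∑ i ∈ Finset.range j, μ.rowLen i ≤ ∑ i ∈ Finset.range j, (hDiag m).rowLen i := by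
  cases j with
  | zero => simp
  | succ k =>
    calc ∑ i ∈ Finset.range (k+1), μ.rowLen i ≤ μ.card := sum_rowLen_le_card μ _
    _ ≤ m := hμ
    _ ≤ ∑ i ∈ Finset.range (k+1), (hDiag m).rowLen i := by
        rw [Finset.sum_range_succ'];
        simp [hDiag_rowLen_zero]
section Max
variable {Γ : Type*} [PartialOrder Γ] [Fintype Γ] [DecidableRel ((· < ·) : Γ → Γ → Prop)]

lemma no_gt_of_max (n : ℕ) (lam : Γ → YoungDiagram) (hsize : ∑ γ : Γ, (lam γ).card = n)
    (hmax : ∀ mu : Γ → YoungDiagram, (∑ γ : Γ, (mu γ).card = n) →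
      GDomG mu lam → GDomG lam mu)
    {γ0 : Γ} (hpos : 0 < (lam γ0).card) : ∀ μ0 : Γ, ¬ γ0 < μ0 := by
  classical
  intro μ0 hlt
  have hne : γ0 ≠ μ0 := ne_of_lt hlt
  set m : ℕ := (lam γ0).card + (lam μ0).card with hm
  set mu : Γ → YoungDiagram :=
    Function.update (Function.update lam γ0 ⊥) μ0 (hDiag m) with hmu
  set clam : Γ → ℕ := fun γ => (lam γ).card with hclam
  have hcmu : (fun γ => (mu γ).card)
      = Function.update (Function.update clam γ0 0) μ0 m := by
    funext γ
    by_cases h1 : γ = μ0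
    · subst h1
      simp [hmu, Function.update_self, hDiag_card]
    · by_cases h2 : γ = γ0
      · subst h2
        simp [hmu, Function.update_of_ne hne, Function.update_self,
          Function.update_of_ne h1]
      · simp [hmu, hclam, Function.update_of_ne h1, Function.update_of_ne h2]
  -- mu evaluated
  have hmuμ0 : mu μ0 = hDiag m := by simp [hmu]
  have hmuγ0 : mu γ0 = ⊥ := by
    simp [hmu, Function.update_of_ne hne]
  have hmuo : ∀ γ, γ ≠ γ0 → γ ≠ μ0 → mu γ = lam γ := by
    intro γ h2 h1
    simp [hmu, Function.update_of_ne h1, Function.update_of_ne h2]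
  -- sums of cards over finsets
  have keyA : ∀ F : Finset Γ, μ0 ∈ F → γ0 ∉ F →
      ∑ γ ∈ F, (mu γ).card = ∑ γ ∈ F, clam γ + (lam γ0).card := by
    intro F hμ hγ
    rw [show (∑ γ ∈ F, (mu γ).card) = ∑ γ ∈ F,
        (Function.update (Function.update clam γ0 0) μ0 m) γ from by rw [← hcmu]]
    rw [Finset.sum_update_of_mem hμ]
    have h1 : ∑ γ ∈ F \ {μ0}, (Function.update clam γ0 0) γ
        = ∑ γ ∈ F \ {μ0}, clam γ := by
      refine Finset.sum_congr rfl fun γ hγ' => ?_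
      have : γ ≠ γ0 := fun h => hγ (h ▸ (Finset.mem_sdiff.mp hγ').1)
      rw [Function.update_of_ne this]
    rw [h1]
    have h2 : ∑ γ ∈ F, clam γ = clam μ0 + ∑ γ ∈ F \ {μ0}, clam γ :=
      Finset.sum_eq_add_sum_sdiff_singleton_of_mem hμ _
    have : clam μ0 = (lam μ0).card := rfl
    omega
  have keyB : ∀ F : Finset Γ, μ0 ∈ F → γ0 ∈ F →
      ∑ γ ∈ F, (mu γ).card = ∑ γ ∈ F, clam γ := by
    intro F hμ hγ
    rw [show (∑ γ ∈ F, (mu γ).card) = ∑ γ ∈ F,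
        (Function.update (Function.update clam γ0 0) μ0 m) γ from by rw [← hcmu]]
    rw [Finset.sum_update_of_mem hμ]
    have hγ' : γ0 ∈ F \ {μ0} := Finset.mem_sdiff.mpr ⟨hγ, by simp [hne]⟩
    rw [Finset.sum_update_of_mem hγ']
    have h2 : ∑ γ ∈ F, clam γ = clam μ0 + ∑ γ ∈ F \ {μ0}, clam γ :=
      Finset.sum_eq_add_sum_sdiff_singleton_of_mem hμ _
    have h3 : ∑ γ ∈ F \ {μ0}, clam γ
        = clam γ0 + ∑ γ ∈ (F \ {μ0}) \ {γ0}, clam γ :=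
      Finset.sum_eq_add_sum_sdiff_singleton_of_mem hγ' _
    have h4 : clam μ0 = (lam μ0).card := rfl
    have h5 : clam γ0 = (lam γ0).card := rfl
    omega
  have keyC : ∀ F : Finset Γ, μ0 ∉ F → γ0 ∉ F →
      ∑ γ ∈ F, (mu γ).card = ∑ γ ∈ F, clam γ := by
    intro F hμ hγ
    refine Finset.sum_congr rfl fun γ hγ' => ?_
    rw [hmuo γ (fun h => hγ (h ▸ hγ')) (fun h => hμ (h ▸ hγ'))]
  -- total size
  have htotal : ∑ γ : Γ, (mu γ).card = n := by
    have := keyB Finset.univ (Finset.mem_univ _) (Finset.mem_univ _)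
    rw [this]
    exact hsize
  -- mu dominates lam
  have hcl : ∀ F : Finset Γ, ∑ γ' ∈ F, clam γ' = ∑ γ' ∈ F, (lam γ').card :=
    fun F => rfl
  have hdom : GDomG mu lam := by
    intro γ j
    by_cases h1 : γ = γ0
    · rw [h1]
      set F : Finset Γ := Finset.univ.filter (fun γ' => γ0 < γ') with hF
      have hμ : μ0 ∈ F := by simp [hF, hlt]
      have hγ : γ0 ∉ F := by simp [hF]
      have hk := keyA F hμ hγ
      have hclF := hcl F
      have hrow : ∑ i ∈ Finset.range j, (lam γ0).rowLen i ≤ (lam γ0).card :=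
        sum_rowLen_le_card _ _
      have hrow2 : ∑ i ∈ Finset.range j, (mu γ0).rowLen i = 0 := by
        rw [hmuγ0]; simp [bot_rowLen]
      omega
    · by_cases h2 : γ = μ0
      · rw [h2]
        set F : Finset Γ := Finset.univ.filter (fun γ' => μ0 < γ') with hF
        have hμ : μ0 ∉ F := by simp [hF]
        have hγ : γ0 ∉ F := by
          simp only [hF, Finset.mem_filter, Finset.mem_univ, true_and]
          exact fun h => absurd (lt_trans hlt h) (lt_irrefl _)
        have hk := keyC F hμ hγ
        have hclF := hcl F
        have hrow : ∑ i ∈ Finset.range j, (lam μ0).rowLen i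
            ≤ ∑ i ∈ Finset.range j, (mu μ0).rowLen i := by
          rw [hmuμ0]
          exact sum_rowLen_hDiag_le m j (lam μ0) (by omega)
        omega
      · set F : Finset Γ := Finset.univ.filter (fun γ' => γ < γ') with hF
        have hμ0F : μ0 ∈ F ↔ γ < μ0 := by simp [hF]
        have hγ0F : γ0 ∈ F ↔ γ < γ0 := by simp [hF]
        have hclF := hcl F
        have hrow : ∑ i ∈ Finset.range j, (mu γ).rowLen i
            = ∑ i ∈ Finset.range j, (lam γ).rowLen i := by
          rw [hmuo γ h1 h2]
        by_cases hμ : μ0 ∈ F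
        · by_cases hγ : γ0 ∈ F
          · have hk := keyB F hμ hγ; omega
          · have hk := keyA F hμ hγ; omega
        · have hγ : γ0 ∉ F := by
            intro h
            exact hμ (hμ0F.mpr (lt_trans (hγ0F.mp h) hlt))
          have hk := keyC F hμ hγ
          omega
  -- contradiction
  have hback := hmax mu htotal hdom γ0 0
  set F : Finset Γ := Finset.univ.filter (fun γ' => γ0 < γ') with hF
  have hμ : μ0 ∈ F := by simp [hF, hlt]
  have hγ : γ0 ∉ F := by simp [hF]
  have hk := keyA F hμ hγ
  have hclF := hcl F
  simp only [Finset.range_zero, Finset.sum_empty, add_zero] at hback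
  omega
end Max
section Key
variable {R : Type*} [CommRing R] {A : Type*} [Ring A] [Algebra R A]
  {Γ : Type*} [PartialOrder Γ] {T : Γ → Type*} [∀ γ, Fintype (T γ)]

lemma Abar_eq_bot (D : CellDatum R A Γ T) {γ : Γ} (hmaxγ : ∀ μ : Γ, ¬ γ < μ) :
    D.Abar γ = ⊥ := by
  rw [CellDatum.Abar]
  convert Submodule.span_empty
  ext x
  simp only [Set.mem_setOf_eq, Set.mem_empty_iff_false, iff_false, not_exists]
  rintro μ ⟨hμ, -⟩
  exact hmaxγ μ hμ

lemma smul_comm_module {M : Type*} [AddCommGroup M] [Module R M] [Module A M]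
    [IsScalarTower R A M] (a : A) (r : R) (m : M) : a • (r • m) = r • (a • m) := by
  rw [← smul_one_smul A r m, ← mul_smul, mul_smul_comm, mul_one, smul_assoc]

/-- Key single-factor lemma: if `γ` is maximal, then `a * y γ` is an `R`-combination of
the `vv γ v * y γ`, and symmetrically on the right. -/
lemma key_lemma (D : CellDatum R A Γ T) {γ : Γ}
    {M : Type*} [AddCommGroup M] [Module R M] [Module A M] [IsScalarTower R A M]
    {e : T γ → M} (hM : IsCellModule D γ M e)
    {δ : M} {p : T γ → R} (hp : ∑ s : T γ, p s • e s = δ)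
    {y : A} (hylift : y - ∑ s : T γ, ∑ t : T γ, (p s * p t) • D.c γ s t ∈ D.Abar γ)
    {vv : T γ → A} (hvv : ∀ t, vv t • δ = e t)
    (hmaxγ : ∀ μ : Γ, ¬ γ < μ) :
    (∀ a : A, ∃ q : T γ → R, a * y = ∑ v : T γ, q v • (vv v * y)) ∧
    (∀ a : A, ∃ q : T γ → R, y * a = ∑ v : T γ, q v • (y * D.star (vv v))) := by
  classical
  have hA : D.Abar γ = ⊥ := Abar_eq_bot D hmaxγ
  rw [hA, Submodule.mem_bot, sub_eq_zero] at hylift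
  choose rr hrr using fun (b : A) (s : T γ) => D.mult γ s b
  have hmul : ∀ (b : A) (s t : T γ),
      b * D.c γ s t = ∑ v : T γ, rr b s v • D.c γ v t := by
    intro b s t
    have := hrr b s t
    rw [show Submodule.span R {x : A | ∃ μ : Γ, γ < μ ∧ ∃ u w : T μ, x = D.c μ u w}
        = D.Abar γ from rfl, hA, Submodule.mem_bot, sub_eq_zero] at this
    exact this
  have hact : ∀ (b : A) (s : T γ), b • e s = ∑ v : T γ, rr b s v • e v := by
    intro b s
    exact hM.2.2 b s (rr b s) (fun t => hrr b s t)
  set Q : A → T γ → R := fun b v => ∑ s : T γ, p s * rr b s v with hQ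
  set w : T γ → A := fun v => ∑ t : T γ, p t • D.c γ v t with hw
  have hby : ∀ b : A, b * y = ∑ v : T γ, Q b v • w v := by
    intro b
    have lhs : b * y = ∑ s : T γ, ∑ t : T γ, ∑ v : T γ,
        ((p s * p t) * rr b s v) • D.c γ v t := by
      rw [hylift]
      simp only [Finset.mul_sum, mul_smul_comm, hmul, Finset.smul_sum, smul_smul]
    have rhs : ∑ v : T γ, Q b v • w v = ∑ v : T γ, ∑ t : T γ, ∑ s : T γ,
        ((p s * p t) * rr b s v) • D.c γ v t := by
      simp only [hQ, hw, Finset.smul_sum, smul_smul, Finset.sum_mul, Finset.sum_smul]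
      refine Finset.sum_congr rfl fun v _ => Finset.sum_congr rfl fun t _ =>
        Finset.sum_congr rfl fun s _ => ?_
      congr 1; ring
    rw [lhs, rhs]
    calc ∑ s : T γ, ∑ t : T γ, ∑ v : T γ, ((p s * p t) * rr b s v) • D.c γ v t
        = ∑ s : T γ, ∑ v : T γ, ∑ t : T γ, ((p s * p t) * rr b s v) • D.c γ v t :=
          Finset.sum_congr rfl fun s _ => Finset.sum_comm
      _ = ∑ v : T γ, ∑ s : T γ, ∑ t : T γ, ((p s * p t) * rr b s v) • D.c γ v t :=
          Finset.sum_comm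
      _ = ∑ v : T γ, ∑ t : T γ, ∑ s : T γ, ((p s * p t) * rr b s v) • D.c γ v t :=
          Finset.sum_congr rfl fun v _ => Finset.sum_comm
  have hQvv : ∀ u v : T γ, Q (vv u) v = if v = u then 1 else 0 := by
    intro u v
    have h1 : ∑ v : T γ, Q (vv u) v • e v = e u := by
      calc ∑ v : T γ, Q (vv u) v • e v
          = ∑ v : T γ, ∑ s : T γ, (p s * rr (vv u) s v) • e v := by
            simp only [hQ, Finset.sum_smul]
        _ = ∑ s : T γ, ∑ v : T γ, (p s * rr (vv u) s v) • e v := Finset.sum_comm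
        _ = ∑ s : T γ, p s • (vv u • e s) := by
            refine Finset.sum_congr rfl fun s _ => ?_
            rw [hact, Finset.smul_sum]
            simp only [smul_smul]
        _ = ∑ s : T γ, vv u • (p s • e s) := by
            simp only [smul_comm_module]
        _ = vv u • δ := by rw [← Finset.smul_sum, hp]
        _ = e u := hvv u
    have h2 : ∑ v : T γ, (Q (vv u) v - if v = u then 1 else 0) • e v = 0 := by
      simp only [sub_smul, Finset.sum_sub_distrib, h1, ite_smul, one_smul, zero_smul,
        Finset.sum_ite_eq', Finset.mem_univ, if_true, sub_self]
    have h3 := Fintype.linearIndependent_iff.mp hM.1 _ h2 v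
    exact sub_eq_zero.mp h3
  have hwv : ∀ u : T γ, vv u * y = w u := by
    intro u
    rw [hby (vv u)]
    simp only [hQvv, ite_smul, one_smul, zero_smul]
    rw [Finset.sum_ite_eq' Finset.univ u w]
    simp
  constructor
  · intro a
    exact ⟨Q a, by rw [hby a]; exact Finset.sum_congr rfl fun v _ => by rw [hwv v]⟩
  · intro a
    have hystar : D.star y = y := by
      have hsc : ∀ s t : T γ, D.star (D.c γ s t) = D.c γ t s := by
        intro s t
        have := D.star_c γ s t
        rw [show Submodule.span R {x : A | ∃ μ : Γ, γ < μ ∧ ∃ u w : T μ, x = D.c μ u w}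
            = D.Abar γ from rfl, hA, Submodule.mem_bot, sub_eq_zero] at this
        exact this
      rw [hylift]
      simp only [map_sum, map_smul, hsc]
      rw [Finset.sum_comm]
      apply Finset.sum_congr rfl; intro s _
      apply Finset.sum_congr rfl; intro t _
      rw [mul_comm]
    refine ⟨Q (D.star a), ?_⟩
    have h1 : D.star a * y = ∑ v : T γ, Q (D.star a) v • (vv v * y) := by
      rw [hby (D.star a)]
      exact Finset.sum_congr rfl fun v _ => by rw [hwv v]
    calc y * a = D.star (D.star (y * a)) := (D.star_star _).symm
    _ = D.star (D.star a * D.star y) := by rw [D.star_mul]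
    _ = D.star (D.star a * y) := by rw [hystar]
    _ = D.star (∑ v : T γ, Q (D.star a) v • (vv v * y)) := by rw [h1]
    _ = ∑ v : T γ, Q (D.star a) v • (y * D.star (vv v)) := by
        simp only [map_sum, map_smul, D.star_mul, hystar]
end Key

/-- Let `A` be a cyclic cellular algebra over an integral domain, with
cyclic cellular data (cell modules `Δ^γ` with generators `δ_γ`, liftings `y_γ` of
`α_γ⁻¹(δ_γ ⊗ δ_γ*)`, and elements `v_t` with `c_t^γ = v_t δ_γ`).  Let `λ ∈ Λ_n^Γ` be maximal
in `Γ`-dominance order, `α = α(λ)`, and let `g : Fin n → Fin r` be the block pattern of `α`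
(monotone with fibre sizes `α_k`), so that `y^α = ⊗ᵢ y_{γ(α)ᵢ}` and `V^α` is the set of
simple tensors with entries in the corresponding `V^{γ}`'s.  Then for every `a ∈ A^{⊗n}`,
`a · y^α` lies in the span of `{v y^α : v ∈ V^α}` and `y^α · a` lies in the span of
`{y^α v* : v ∈ V^α}`. -/
theorem stmt_16 {R : Type*} [CommRing R] [IsDomain R] {A : Type*} [Ring A] [Algebra R A]
    {Γ : Type*} [PartialOrder Γ] [Fintype Γ] [DecidableRel ((· < ·) : Γ → Γ → Prop)]
    {T : Γ → Type*} [∀ γ, Fintype (T γ)]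
    (D : CellDatum R A Γ T)
    (M : Γ → Type*) [∀ γ, AddCommGroup (M γ)] [∀ γ, Module R (M γ)]
    [∀ γ, Module A (M γ)] [∀ γ, IsScalarTower R A (M γ)]
    (e : ∀ γ, T γ → M γ) (hM : ∀ γ, IsCellModule D γ (M γ) (e γ))
    (δ : ∀ γ, M γ) (hδ : ∀ γ, Submodule.span A {δ γ} = ⊤)
    (p : ∀ γ, T γ → R) (hp : ∀ γ, ∑ s : T γ, p γ s • e γ s = δ γ)
    (y : Γ → A) (hymem : ∀ γ, y γ ∈ D.Aup γ)
    (hylift : ∀ γ,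
      y γ - ∑ s : T γ, ∑ t : T γ, (p γ s * p γ t) • D.c γ s t ∈ D.Abar γ)
    (vv : ∀ γ, T γ → A) (hvv : ∀ γ (t : T γ), vv γ t • δ γ = e γ t)
    {r : ℕ} (l : Fin r → Γ) (hl : Function.Bijective l)
    (hcomp : ∀ i j : Fin r, l j ≤ l i → i ≤ j)
    (n : ℕ) (lam : Γ → YoungDiagram) (hsize : ∑ γ : Γ, (lam γ).card = n)
    (hmax : ∀ mu : Γ → YoungDiagram, (∑ γ : Γ, (mu γ).card = n) →
      GDomG mu lam → GDomG lam mu)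
    (g : Fin n → Fin r) (hg : Monotone g)
    (hgcount : ∀ k : Fin r,
      (Finset.univ.filter fun i : Fin n => g i = k).card = (lam (l k)).card) :
    (∀ a : ⨂[R] _ : Fin n, A,
      a * (⨂ₜ[R] i, y (l (g i))) ∈ Submodule.span R
        {z : ⨂[R] _ : Fin n, A | ∃ τ : ∀ i : Fin n, T (l (g i)),
          z = (⨂ₜ[R] i, vv (l (g i)) (τ i)) * (⨂ₜ[R] i, y (l (g i)))}) ∧
    (∀ a : ⨂[R] _ : Fin n, A,
      (⨂ₜ[R] i, y (l (g i))) * a ∈ Submodule.span R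
        {z : ⨂[R] _ : Fin n, A | ∃ τ : ∀ i : Fin n, T (l (g i)),
          z = (⨂ₜ[R] i, y (l (g i))) * (⨂ₜ[R] i, D.star (vv (l (g i)) (τ i)))}) := by
  classical
  have hposi : ∀ i : Fin n, 0 < (lam (l (g i))).card := by
    intro i
    rw [← hgcount (g i)]
    exact Finset.card_pos.mpr ⟨i, by simp⟩
  have hmaxi : ∀ i : Fin n, ∀ μ : Γ, ¬ l (g i) < μ := fun i =>
    no_gt_of_max n lam hsize hmax (hposi i)
  have hkey := fun i : Fin n => key_lemma D (hM (l (g i))) (hp (l (g i)))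
      (hylift (l (g i))) (hvv (l (g i))) (hmaxi i)
  constructor
  · intro a
    induction a using PiTensorProduct.induction_on with
    | smul_tprod r f =>
      rw [smul_mul_assoc]
      apply Submodule.smul_mem
      choose q hq using fun i => (hkey i).1 (f i)
      rw [PiTensorProduct.tprod_mul_tprod]
      have h2 : tprod R ((fun i => f i) * fun i => y (l (g i))) =
          ∑ τ : ∀ i : Fin n, T (l (g i)),
            (∏ i, q i (τ i)) • tprod R (fun i => vv (l (g i)) (τ i) * y (l (g i))) := by
        calc tprod R ((fun i => f i) * fun i => y (l (g i)))
            = tprod R (fun i => ∑ v : T (l (g i)),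
                q i v • (vv (l (g i)) v * y (l (g i)))) := by
              congr 1; funext i; exact hq i
          _ = ∑ τ : ∀ i : Fin n, T (l (g i)),
                tprod R (fun i => q i (τ i) • (vv (l (g i)) (τ i) * y (l (g i)))) :=
              MultilinearMap.map_sum _ _
          _ = ∑ τ : ∀ i : Fin n, T (l (g i)),
                (∏ i, q i (τ i)) • tprod R (fun i => vv (l (g i)) (τ i) * y (l (g i))) :=
              Finset.sum_congr rfl fun τ _ => MultilinearMap.map_smul_univ _ _ _
      rw [h2]
      apply Submodule.sum_mem
      intro τ _
      apply Submodule.smul_mem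
      apply Submodule.subset_span
      exact ⟨τ, by rw [PiTensorProduct.tprod_mul_tprod]; rfl⟩
    | add x z hx hz =>
      rw [add_mul]; exact Submodule.add_mem _ hx hz
  · intro a
    induction a using PiTensorProduct.induction_on with
    | smul_tprod r f =>
      rw [mul_smul_comm]
      apply Submodule.smul_mem
      choose q hq using fun i => (hkey i).2 (f i)
      rw [PiTensorProduct.tprod_mul_tprod]
      have h2 : tprod R ((fun i => y (l (g i))) * fun i => f i) =
          ∑ τ : ∀ i : Fin n, T (l (g i)),
            (∏ i, q i (τ i)) •
              tprod R (fun i => y (l (g i)) * D.star (vv (l (g i)) (τ i))) := by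
        calc tprod R ((fun i => y (l (g i))) * fun i => f i)
            = tprod R (fun i => ∑ v : T (l (g i)),
                q i v • (y (l (g i)) * D.star (vv (l (g i)) v))) := by
              congr 1; funext i; exact hq i
          _ = ∑ τ : ∀ i : Fin n, T (l (g i)),
                tprod R (fun i =>
                  q i (τ i) • (y (l (g i)) * D.star (vv (l (g i)) (τ i)))) :=
              MultilinearMap.map_sum _ _
          _ = ∑ τ : ∀ i : Fin n, T (l (g i)),
                (∏ i, q i (τ i)) •
                  tprod R (fun i => y (l (g i)) * D.star (vv (l (g i)) (τ i))) :=
              Finset.sum_congr rfl fun τ _ => MultilinearMap.map_smul_univ _ _ _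
      rw [h2]
      apply Submodule.sum_mem
      intro τ _
      apply Submodule.smul_mem
      apply Submodule.subset_span
      exact ⟨τ, by rw [PiTensorProduct.tprod_mul_tprod]; rfl⟩
    | add x z hx hz =>
      rw [mul_add]; exact Submodule.add_mem _ hx hz
end

section
/- Let A be an R-algebra with involution * and *-invariant trace tr, with tr(1) = δ₀. Define Tr on A ≀ 𝔖_n by: for a simple tensor a = a₁⊗⋯⊗a_n and π ∈ 𝔖_n, Tr(π a) = Π_o o(a), where the product is over orbits o = (i, π(i), ..., π^k(i)) of π on {1,...,n} and o(a) = tr(a_{π^k(i)} ⋯ a_{π(i)} a_i). Then Tr is a *-invariant trace on A ≀ 𝔖_n (i.e., Tr(xy) = Tr(yx) and Tr(x*) = Tr(x)) with Tr(1) = δ₀ⁿ. -/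
/-!
On a pure element `(a₁ ⊗ ⋯ ⊗ aₙ) π` the trace is a product, over the cycles of `π`, of traces of
cyclic words in the `aᵢ`; these do not depend on where a word starts because `tr` is cyclic.
The permutations `p s` and `s p = s (p s) s⁻¹` are conjugate by `s`, so `s` matches their
cycles, and along matched cycles the words of `x y` and `y x` interleave the same letters and
differ by a rotation: this gives `Tr (x y) = Tr (y x)` on pure elements. The involution
replaces `π` by `π⁻¹`, which has the same cycles, and reverses each word, which `*`-invariance
of `tr` absorbs. Pure elements span the wreath product, so both identities extend by linearity.
-/

open scoped TensorProduct Classical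

/-- The ordered product of labels along (part of) a cycle of `π`:
`cycProd π a i m = a (π^m i) * ⋯ * a (π i) * a i`. -/
def cycProd {n : ℕ} {A : Type*} [Ring A] (π : Equiv.Perm (Fin n)) (a : Fin n → A)
    (i : Fin n) : ℕ → A
  | 0 => a i
  | m + 1 => a ((π ^ (m + 1)) i) * cycProd π a i m

open Equiv Finset

theorem apply_eq_of_sameCycle {α M : Type*} [Finite α] {τ : Perm α} {f : α → M}
    (hf : ∀ i, f (τ i) = f i) {x y : α} (h : τ.SameCycle x y) : f y = f x := by
  obtain ⟨k, rfl⟩ := h.exists_nat_pow_eq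
  clear h
  induction k with
  | zero => rfl
  | succ k ih => rw [pow_succ', Perm.mul_apply, hf, ih]

section CycleReps

variable {α : Type*} [Fintype α] [LinearOrder α]

noncomputable def cycleReps (π : Perm α) : Finset α :=
  univ.filter fun i => ∀ k : ℕ, i ≤ (π ^ k) i

noncomputable def cycleRep (π : Perm α) (x : α) : α :=
  (univ.filter (π.SameCycle x)).min' ⟨x, by simp [Perm.SameCycle.refl]⟩

theorem sameCycle_cycleRep (π : Perm α) (x : α) : π.SameCycle x (cycleRep π x) :=
  (mem_filter.1 (min'_mem _ _)).2

theorem cycleRep_le {π : Perm α} {x y : α} (h : π.SameCycle x y) : cycleRep π x ≤ y :=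
  min'_le _ _ (by simpa using h)

theorem cycleRep_eq_of_sameCycle {π : Perm α} {x y : α} (h : π.SameCycle x y) :
    cycleRep π x = cycleRep π y :=
  le_antisymm (cycleRep_le (h.trans (sameCycle_cycleRep π y)))
    (cycleRep_le (h.symm.trans (sameCycle_cycleRep π x)))

theorem mem_cycleReps_iff {π : Perm α} {i : α} : i ∈ cycleReps π ↔ cycleRep π i = i := by
  simp only [cycleReps, mem_filter, mem_univ, true_and]
  constructor
  · intro h
    obtain ⟨k, hk⟩ := (sameCycle_cycleRep π i).exists_nat_pow_eq
    exact le_antisymm (cycleRep_le (Perm.SameCycle.refl π i)) (hk ▸ h k)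
  · intro h k
    calc i = cycleRep π i := h.symm
      _ ≤ (π ^ k) i := cycleRep_le (Perm.sameCycle_pow_right.2 (Perm.SameCycle.refl π i))

theorem cycleRep_mem_cycleReps (π : Perm α) (x : α) : cycleRep π x ∈ cycleReps π :=
  mem_cycleReps_iff.2 (cycleRep_eq_of_sameCycle (sameCycle_cycleRep π x)).symm

theorem cycleRep_inv (π : Perm α) (x : α) : cycleRep π⁻¹ x = cycleRep π x :=
  le_antisymm (cycleRep_le (Perm.sameCycle_inv.2 (sameCycle_cycleRep π x)))
    (cycleRep_le (Perm.sameCycle_inv.1 (sameCycle_cycleRep π⁻¹ x)))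

theorem cycleReps_inv (π : Perm α) : cycleReps π⁻¹ = cycleReps π := by
  ext i
  rw [mem_cycleReps_iff, mem_cycleReps_iff, cycleRep_inv]

theorem prod_cycleReps_conj {M : Type*} [CommMonoid M] (τ σ : Perm α) {f g : α → M}
    (hf : ∀ i, f (τ i) = f i) (hg : ∀ i, g (σ i) = f i) :
    ∏ i ∈ cycleReps (σ * τ * σ⁻¹), g i = ∏ i ∈ cycleReps τ, f i := by
  have hconj {x y : α} : (σ * τ * σ⁻¹).SameCycle x y ↔ τ.SameCycle (σ⁻¹ x) (σ⁻¹ y) :=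
    Perm.sameCycle_conj
  refine prod_nbij' (fun j => cycleRep τ (σ⁻¹ j)) (fun i => cycleRep (σ * τ * σ⁻¹) (σ i))
    (fun j _ => cycleRep_mem_cycleReps τ _) (fun i _ => cycleRep_mem_cycleReps _ _) ?_ ?_ ?_
  · intro j hj
    refine (cycleRep_eq_of_sameCycle (hconj.2 ?_)).trans (mem_cycleReps_iff.1 hj)
    simpa using (sameCycle_cycleRep τ (σ⁻¹ j)).symm
  · intro i hi
    refine (cycleRep_eq_of_sameCycle ?_).trans (mem_cycleReps_iff.1 hi)
    simpa using (hconj.1 (sameCycle_cycleRep (σ * τ * σ⁻¹) (σ i))).symm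
  · intro j _
    rw [apply_eq_of_sameCycle hf (sameCycle_cycleRep τ (σ⁻¹ j)), ← hg, Perm.coe_inv,
      Equiv.apply_symm_apply]

end CycleReps

section CycleLength

variable {α : Type*} [Fintype α] [DecidableEq α]

theorem pow_card_support_cycleOf_sub_one_add_one_apply (π : Perm α) (x : α) :
    (π ^ ((π.cycleOf x).support.card - 1 + 1)) x = x := by
  by_cases hx : π x = x
  · exact Perm.pow_apply_eq_self_of_apply_eq_self hx _
  · rw [Nat.sub_add_cancel (card_pos.2 (Perm.support_cycleOf_nonempty.2 hx)),
      ← Perm.pow_mod_card_support_cycleOf_self_apply, Nat.mod_self, pow_zero, Perm.one_apply]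

theorem cycleOf_conj (τ σ : Perm α) (x : α) :
    (σ * τ * σ⁻¹).cycleOf (σ x) = σ * τ.cycleOf x * σ⁻¹ := by
  ext y
  simp only [Perm.cycleOf_apply, Perm.sameCycle_conj, Perm.mul_apply, Perm.coe_inv,
    Equiv.symm_apply_apply]
  split_ifs <;> simp

theorem card_support_cycleOf_conj (τ σ : Perm α) (x : α) :
    ((σ * τ * σ⁻¹).cycleOf (σ x)).support.card = (τ.cycleOf x).support.card := by
  rw [cycleOf_conj, Perm.card_support_conj]

theorem card_support_cycleOf_inv (π : Perm α) [DecidableRel π⁻¹.SameCycle] (x : α) :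
    (π⁻¹.cycleOf x).support.card = (π.cycleOf x).support.card := by
  rw [← Perm.support_inv, Perm.cycleOf_inv]
  congr!

end CycleLength

section CycProd

variable {n : ℕ} {A : Type*} [Ring A]

theorem cycProd_shift (π : Perm (Fin n)) (c : Fin n → A) (i : Fin n) (m : ℕ) :
    cycProd π c (π i) m = cycProd π (fun j => c (π j)) i m := by
  induction m with
  | zero => rfl
  | succ m ih =>
    simp only [cycProd, ih, ← Perm.mul_apply, ← pow_succ, ← pow_succ']

theorem cycProd_succ' (π : Perm (Fin n)) (c : Fin n → A) (i : Fin n) (m : ℕ) :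
    cycProd π c i (m + 1) = cycProd π (fun j => c (π j)) i m * c i := by
  induction m with
  | zero => simp [cycProd]
  | succ m ih =>
    rw [cycProd, ih, cycProd, ← mul_assoc, pow_succ' π (m + 1), Perm.mul_apply]

theorem cycProd_conj (τ σ : Perm (Fin n)) (c : Fin n → A) (i : Fin n) (m : ℕ) :
    cycProd (σ * τ * σ⁻¹) c (σ i) m = cycProd τ (fun j => c (σ j)) i m := by
  induction m with
  | zero => rfl
  | succ m ih => simp [cycProd, ih, conj_pow]

theorem exists_cycProd_mul_eq (π : Perm (Fin n)) (x y : Fin n → A) (i : Fin n) (m : ℕ) :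
    ∃ M, cycProd π (fun j => x (π j) * y j) i m = x ((π ^ (m + 1)) i) * M ∧
      cycProd π (fun j => y j * x j) i m = M * x i := by
  induction m with
  | zero => exact ⟨y i, by simp [cycProd]⟩
  | succ m ih =>
    obtain ⟨M, hP, hR⟩ := ih
    refine ⟨y ((π ^ (m + 1)) i) * x ((π ^ (m + 1)) i) * M, ?_, ?_⟩
    · rw [cycProd, hP, ← Perm.mul_apply, ← pow_succ']
      simp only [mul_assoc]
    · rw [cycProd, hR]
      simp only [mul_assoc]

theorem star_cycProd_inv (star : A → A) (hsm : ∀ a b, star (a * b) = star b * star a)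
    (hss : ∀ a, star (star a) = a) (π : Perm (Fin n)) (a : Fin n → A) (i : Fin n) (m : ℕ) :
    star (cycProd π⁻¹ (fun j => star (a j)) ((π ^ (m + 1)) i) m) =
      cycProd π (fun j => a (π j)) i m := by
  induction m generalizing i with
  | zero => simp [cycProd, hss]
  | succ m ih =>
    have hback : (π⁻¹ ^ (m + 1)) ((π ^ (m + 1 + 1)) i) = π i := by
      rw [inv_pow, ← Perm.mul_apply, pow_succ π (m + 1), inv_mul_cancel_left]
    rw [cycProd, hsm, hss, hback, pow_succ, Perm.mul_apply, ih, cycProd_succ', cycProd_shift]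

variable {B : Type*} (tr : A → B) (htr : ∀ a b, tr (a * b) = tr (b * a))
include htr

theorem tr_cycProd_mul_comm {π : Perm (Fin n)} {i : Fin n} {m : ℕ} (hper : (π ^ (m + 1)) i = i)
    (x y : Fin n → A) :
    tr (cycProd π (fun j => x (π j) * y j) i m) = tr (cycProd π (fun j => y j * x j) i m) := by
  obtain ⟨M, hP, hR⟩ := exists_cycProd_mul_eq π x y i m
  rw [hP, hR, hper, htr]

theorem tr_cycProd_shift {π : Perm (Fin n)} {i : Fin n} {m : ℕ} (hper : (π ^ (m + 1)) i = i)
    (c : Fin n → A) : tr (cycProd π c (π i) m) = tr (cycProd π c i m) := by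
  simpa [cycProd_shift] using tr_cycProd_mul_comm tr htr hper c 1

end CycProd

section CycleTrace

variable {n : ℕ} {A B : Type*} [Ring A] (tr : A → B)

/-- The factor `o(a)` of the orbit of `i`. For a fixed point `(π.cycleOf i).support` is empty,
and the truncated `0 - 1 = 0` still gives the one-letter product `c i`. -/
def cycleTrace (π : Perm (Fin n)) (c : Fin n → A) (i : Fin n) : B :=
  tr (cycProd π c i ((π.cycleOf i).support.card - 1))

theorem cycleTrace_conj (τ σ : Perm (Fin n)) (c : Fin n → A) (i : Fin n) :
    cycleTrace tr (σ * τ * σ⁻¹) c (σ i) = cycleTrace tr τ (fun j => c (σ j)) i := by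
  rw [cycleTrace, cycleTrace, card_support_cycleOf_conj, cycProd_conj]

theorem cycleTrace_inv_star (star : A → A) (hsm : ∀ a b, star (a * b) = star b * star a)
    (hss : ∀ a, star (star a) = a) (htrs : ∀ a, tr (star a) = tr a)
    (π : Perm (Fin n)) (a : Fin n → A) (i : Fin n) :
    cycleTrace tr π⁻¹ (fun j => star (a j)) i = cycleTrace tr π (fun j => a (π j)) i := by
  rw [cycleTrace, cycleTrace, card_support_cycleOf_inv, ← htrs,
    ← star_cycProd_inv star hsm hss, pow_card_support_cycleOf_sub_one_add_one_apply]

variable (htr : ∀ a b, tr (a * b) = tr (b * a))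
include htr

theorem cycleTrace_apply_self (π : Perm (Fin n)) (c : Fin n → A) (i : Fin n) :
    cycleTrace tr π c (π i) = cycleTrace tr π c i := by
  rw [cycleTrace, cycleTrace, Perm.cycleOf_self_apply,
    tr_cycProd_shift tr htr (pow_card_support_cycleOf_sub_one_add_one_apply π i)]

theorem cycleTrace_mul_comm (π : Perm (Fin n)) (x y : Fin n → A) (i : Fin n) :
    cycleTrace tr π (fun j => x (π j) * y j) i = cycleTrace tr π (fun j => y j * x j) i :=
  tr_cycProd_mul_comm tr htr (pow_card_support_cycleOf_sub_one_add_one_apply π i) x y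

theorem prod_cycleTrace_mul_comm [CommMonoid B] (p s : Perm (Fin n)) (a b : Fin n → A) :
    ∏ i ∈ cycleReps (p * s), cycleTrace tr (p * s) (fun j => a (p (s j)) * b (s j)) i =
      ∏ i ∈ cycleReps (s * p), cycleTrace tr (s * p) (fun j => b (s (p j)) * a (p j)) i := by
  have hconj : s * p = s * (p * s) * s⁻¹ := by group
  rw [hconj]
  refine (prod_cycleReps_conj (p * s) s (cycleTrace_apply_self tr htr _ _) fun i => ?_).symm
  rw [cycleTrace_conj]
  exact cycleTrace_mul_comm tr htr (p * s) (fun j => b (s j)) (fun j => a (p (s j))) i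

end CycleTrace

section Spanning

variable {R : Type*} [CommSemiring R]

theorem span_range_tprod_tmul_single (ι M G : Type*) [Fintype ι] [AddCommMonoid M] [Module R M] :
    Submodule.span R (Set.range fun p : (ι → M) × G =>
      PiTensorProduct.tprod R p.1 ⊗ₜ[R] Finsupp.single p.2 (1 : R)) = ⊤ := by
  have hsingle : Submodule.span R (Set.range fun g : G => Finsupp.single g (1 : R)) = ⊤ := by
    simpa only [Finsupp.coe_basisSingleOne] using
      (Finsupp.basisSingleOne (R := R) (ι := G)).span_eq
  have h := Submodule.map₂_span_span R (TensorProduct.mk R (⨂[R] _ : ι, M) (G →₀ R))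
    (Set.range (PiTensorProduct.tprod R)) (Set.range fun g : G => Finsupp.single g (1 : R))
  rwa [PiTensorProduct.span_tprod_eq_top, hsingle, TensorProduct.map₂_mk_top_top_eq_top,
    Set.image2_range, eq_comm] at h

theorem span_range_map_tprod_tmul_single {ι M G W : Type*} [Fintype ι] [AddCommMonoid M]
    [Module R M] [AddCommMonoid W] [Module R W]
    (φ : ((⨂[R] _ : ι, M) ⊗[R] (G →₀ R)) ≃ₗ[R] W) :
    Submodule.span R (Set.range fun p : (ι → M) × G =>
      φ (PiTensorProduct.tprod R p.1 ⊗ₜ[R] Finsupp.single p.2 (1 : R))) = ⊤ := by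
  have h := congrArg (Submodule.map φ.toLinearMap) (span_range_tprod_tmul_single (R := R) ι M G)
  rwa [Submodule.map_span, ← Set.range_comp, Submodule.map_top, LinearEquiv.range] at h

theorem map_mul_comm_of_span_eq_top {W M ι : Type*} [Semiring W] [Algebra R W] [AddCommMonoid M]
    [Module R M] (Tr : W →ₗ[R] M) {v : ι → W} (hv : Submodule.span R (Set.range v) = ⊤)
    (h : ∀ i j, Tr (v i * v j) = Tr (v j * v i)) (x y : W) : Tr (x * y) = Tr (y * x) := by
  have hbilin : (LinearMap.mul R W).compr₂ Tr = (LinearMap.mul R W).flip.compr₂ Tr :=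
    LinearMap.ext_on_range hv fun i => LinearMap.ext_on_range hv fun j => h i j
  exact LinearMap.congr_fun₂ hbilin x y

end Spanning

/-- Let `A` be an `R`-algebra with involution `*` and `*`-invariant trace
`tr`, `tr 1 = δ₀`.  Let `W` be the wreath product `A ≀ 𝔖_n`, axiomatized as an `R`-algebra
linearly isomorphic to `A^{⊗n} ⊗ R[𝔖_n]` via `φ`, with pure elements
`wm a π = φ ((a₁ ⊗ ⋯ ⊗ aₙ) ⊗ π)`, the wreath multiplication, and the wreath involution.
Define `Tr` on `W` by `Tr (π · a) = ∏_{orbits o of π} tr (a_{π^k i} ⋯ a_{π i} a_i)` (product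
over the minimal representatives `i` of the orbits).  Then `Tr` is a `*`-invariant trace with
`Tr 1 = δ₀ⁿ`. -/
theorem stmt_17 {R : Type*} [CommRing R] {A : Type*} [Ring A] [Algebra R A]
    (star : A →ₗ[R] A) (hsm : ∀ a b : A, star (a * b) = star b * star a)
    (hss : ∀ a : A, star (star a) = a)
    (tr : A →ₗ[R] R) (htr : ∀ a b : A, tr (a * b) = tr (b * a))
    (htrs : ∀ a : A, tr (star a) = tr a)
    (δ₀ : R) (htr1 : tr 1 = δ₀)
    (n : ℕ) (W : Type*) [Ring W] [Algebra R W]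
    (φ : ((⨂[R] _ : Fin n, A) ⊗[R] (Equiv.Perm (Fin n) →₀ R)) ≃ₗ[R] W)
    -- `wm a π` denotes the element `(a₁ ⊗ ⋯ ⊗ aₙ) π` of the wreath product
    (wm : (Fin n → A) → Equiv.Perm (Fin n) → W)
    (hwm : ∀ (a : Fin n → A) (π : Equiv.Perm (Fin n)),
      wm a π = φ ((PiTensorProduct.tprod R a) ⊗ₜ[R] Finsupp.single π (1 : R)))
    (hone : wm (fun _ => 1) 1 = 1)
    (hmul : ∀ (a b : Fin n → A) (π σ : Equiv.Perm (Fin n)),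
      wm a π * wm b σ = wm (fun i => a i * b (π⁻¹ i)) (π * σ))
    (starW : W →ₗ[R] W)
    (hstarW : ∀ (a : Fin n → A) (π : Equiv.Perm (Fin n)),
      starW (wm a π) = wm (fun i => star (a (π i))) π⁻¹)
    (Tr : W →ₗ[R] R)
    (hTr : ∀ (π : Equiv.Perm (Fin n)) (a : Fin n → A),
      Tr (wm (fun i => a (π⁻¹ i)) π) =
        ∏ i ∈ Finset.univ.filter (fun i : Fin n => ∀ k : ℕ, i ≤ (π ^ k) i),
          tr (cycProd π a i ((π.cycleOf i).support.card - 1))) :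
    (∀ x y : W, Tr (x * y) = Tr (y * x)) ∧ (∀ x : W, Tr (starW x) = Tr x) ∧
      Tr 1 = δ₀ ^ n := by
  have hTr' (b : Fin n → A) (p : Perm (Fin n)) :
      Tr (wm b p) = ∏ i ∈ cycleReps p, cycleTrace tr p (fun j => b (p j)) i := by
    have h := hTr p fun j => b (p j)
    simp only [Perm.coe_inv, Equiv.apply_symm_apply] at h
    exact h
  have hspan : Submodule.span R
      (Set.range fun q : (Fin n → A) × Perm (Fin n) => wm q.1 q.2) = ⊤ := by
    simpa only [hwm] using span_range_map_tprod_tmul_single φ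
  refine ⟨map_mul_comm_of_span_eq_top Tr hspan fun ⟨a, p⟩ ⟨b, s⟩ => ?_, fun x => ?_, ?_⟩
  · simp only [hmul, hTr', Perm.mul_apply, Perm.coe_inv, Equiv.symm_apply_apply]
    exact prod_cycleTrace_mul_comm tr htr p s a b
  · have hstar : Tr ∘ₗ starW = Tr := LinearMap.ext_on_range hspan fun ⟨a, p⟩ => by
      simp only [LinearMap.comp_apply, hstarW, hTr', Perm.coe_inv, Equiv.apply_symm_apply,
        cycleReps_inv, cycleTrace_inv_star tr star hsm hss htrs]
    exact LinearMap.congr_fun hstar x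
  · rw [← hone, hTr']
    simp [cycleReps, cycleTrace, cycProd, htr1]
end

section
/- Every n-strand Brauer diagram d of rank s = n − 2f admits a unique factorization d = α (d₀ ⊙ d₁) β*, where α and β are (2f, s)-shuffle permutations (regarded as permutation diagrams), d₀ is a 2f-strand Brauer diagram of rank 0, d₁ is an s-strand permutation diagram, and ⊙ denotes horizontal juxtaposition of diagrams. -/
/-- An `m`-strand Brauer diagram, modelled as a fixed-point-free involution of the `2m`
vertices `Fin m ⊕ Fin m` (`inl` = top vertices, `inr` = bottom vertices). -/
def IsBrauerMatching {m : ℕ} (d : Equiv.Perm (Fin m ⊕ Fin m)) : Prop :=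
  (∀ x, d (d x) = x) ∧ ∀ x, d x ≠ x

/-- The rank of a Brauer diagram: the number of through strands. -/
def diagRank {m : ℕ} (d : Equiv.Perm (Fin m ⊕ Fin m)) : ℕ :=
  (Finset.univ.filter fun i : Fin m => ∃ j : Fin m, d (Sum.inl i) = Sum.inr j).card

/-- A `(k, n-k)`-shuffle: a permutation increasing on `{0, …, k-1}` and on `{k, …, n-1}`. -/
def IsShuffle (n k : ℕ) (π : Equiv.Perm (Fin n)) : Prop :=
  ∀ i j : Fin n, i < j →
    (((i : ℕ) < k ∧ (j : ℕ) < k) ∨ (k ≤ (i : ℕ) ∧ k ≤ (j : ℕ))) → π i < π j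

/-- The permutation diagram of `π`, connecting top vertex `i` with bottom vertex `π i`. -/
def permDiag {s : ℕ} (π : Equiv.Perm (Fin s)) : Equiv.Perm (Fin s ⊕ Fin s) :=
  (Equiv.sumComm (Fin s) (Fin s)).trans (Equiv.sumCongr π⁻¹ π)

/-- Horizontal juxtaposition `d₀ ⊙ d₁` of an `a`-strand diagram and a `b`-strand diagram. -/
def juxt {a b : ℕ} (d₀ : Equiv.Perm (Fin a ⊕ Fin a)) (d₁ : Equiv.Perm (Fin b ⊕ Fin b)) :
    Equiv.Perm (Fin (a + b) ⊕ Fin (a + b)) :=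
  ((Equiv.sumSumSumComm (Fin a) (Fin a) (Fin b) (Fin b)).trans
      (Equiv.sumCongr finSumFinEquiv finSumFinEquiv)).permCongr
    (Equiv.sumCongr d₀ d₁)

/-!
The top vertices on through strands form an `s`-set `T`, the bottom ones an `s`-set `B`
(the strands match them up). A `(2f, s)`-shuffle is determined by the image of its last `s`
positions, so exactly one shuffle `β` carries them onto `T` and exactly one `α` onto `B`.
Conjugating `d` by `α` and `β` moves every through strand to the last `s` positions of both rows;
such a matching preserves the first `2f` positions of both rows, hence splits as `d₀ ⊙ d₁` with
`d₀` of rank `0` and `d₁` a permutation diagram. Conversely, in any such factorization the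
through strands of `d` sit at the `β`- and `α`-images of the last `s` positions, which pins down
`α` and `β`, and then `d₀` and `d₁`.
-/

open Equiv Finset

section Shuffle

variable {k m : ℕ}

lemma isShuffle_iff {π : Perm (Fin (k + m))} :
    IsShuffle (k + m) k π ↔ StrictMono (π ∘ Fin.castAdd m) ∧ StrictMono (π ∘ Fin.natAdd k) := by
  refine ⟨fun h => ⟨fun i j hij => h _ _ hij (.inl ⟨i.2, j.2⟩),
    fun i j hij => h _ _ (by simpa using hij) (.inr ⟨by simp, by simp⟩)⟩, ?_⟩
  rintro ⟨hlow, hhigh⟩ i j hij (⟨hi, hj⟩ | ⟨hi, hj⟩)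
  · exact hlow (a := ⟨i, hi⟩) (b := ⟨j, hj⟩) hij
  · obtain ⟨i, rfl⟩ : ∃ i', Fin.natAdd k i' = i := ⟨⟨i - k, by omega⟩, Fin.ext (by simp; omega)⟩
    obtain ⟨j, rfl⟩ : ∃ j', Fin.natAdd k j' = j := ⟨⟨j - k, by omega⟩, Fin.ext (by simp; omega)⟩
    exact hhigh (by simpa using hij)

lemma card_compl_eq_of_card_eq {S : Finset (Fin (k + m))} (hS : #S = m) : #Sᶜ = k := by
  simp [card_compl, hS]

def shuffleOf (S : Finset (Fin (k + m))) (hS : #S = m) : Perm (Fin (k + m)) :=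
  finSumFinEquiv.symm.trans <|
    (sumCongr (Sᶜ.orderIsoOfFin (card_compl_eq_of_card_eq hS)).toEquiv
      ((S.orderIsoOfFin hS).toEquiv.trans (subtypeEquivRight fun _ => by simp))).trans
    (sumCompl (· ∈ Sᶜ))

variable (S : Finset (Fin (k + m))) (hS : #S = m)

@[simp]
lemma shuffleOf_castAdd (i : Fin k) :
    shuffleOf S hS (Fin.castAdd m i) = Sᶜ.orderEmbOfFin (card_compl_eq_of_card_eq hS) i := by
  simp [shuffleOf]

@[simp]
lemma shuffleOf_natAdd (i : Fin m) : shuffleOf S hS (Fin.natAdd k i) = S.orderEmbOfFin hS i := by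
  simp [shuffleOf]

lemma isShuffle_shuffleOf : IsShuffle (k + m) k (shuffleOf S hS) := by
  rw [isShuffle_iff]
  constructor <;> intro i j hij <;> simpa using hij

lemma shuffleOf_mem_iff (i : Fin (k + m)) : shuffleOf S hS i ∈ S ↔ k ≤ i := by
  induction i using Fin.addCases with
  | left i => simpa [Nat.not_le.mpr i.2] using Sᶜ.orderEmbOfFin_mem _ i
  | right i => simp [S.orderEmbOfFin_mem hS i]

lemma eq_shuffleOf {π : Perm (Fin (k + m))} (hπ : IsShuffle (k + m) k π)
    (hπS : ∀ i, π i ∈ S ↔ k ≤ i) : π = shuffleOf S hS := by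
  rw [isShuffle_iff] at hπ
  have hlow := orderEmbOfFin_unique (card_compl_eq_of_card_eq hS)
    (f := π ∘ Fin.castAdd m) (fun i => by simp [hπS, i.2]) hπ.1
  have hhigh := orderEmbOfFin_unique hS (f := π ∘ Fin.natAdd k) (fun i => by simp [hπS]) hπ.2
  refine Equiv.ext fun i => ?_
  induction i using Fin.addCases with
  | left i => simpa using congrFun hlow i
  | right i => simpa using congrFun hhigh i

end Shuffle

section ThroughStrands

open Sum

variable {m : ℕ}

def throughTop (d : Perm (Fin m ⊕ Fin m)) : Finset (Fin m) := {i | ∃ j, d (inl i) = inr j}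

def throughBot (d : Perm (Fin m ⊕ Fin m)) : Finset (Fin m) := {i | ∃ j, d (inr i) = inl j}

lemma mem_throughTop {d : Perm (Fin m ⊕ Fin m)} {i : Fin m} :
    i ∈ throughTop d ↔ ∃ j, d (inl i) = inr j := by
  simp [throughTop]

lemma mem_throughBot {d : Perm (Fin m ⊕ Fin m)} {i : Fin m} :
    i ∈ throughBot d ↔ ∃ j, d (inr i) = inl j := by
  simp [throughBot]

lemma card_throughBot {d : Perm (Fin m ⊕ Fin m)} (hd : ∀ x, d (d x) = x) :
    #(throughBot d) = #(throughTop d) := by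
  have partner {x y} : d x = y → d y = x := fun h => h ▸ hd x
  refine card_nbij' (fun i => (d (inr i)).elim id id) (fun j => (d (inl j)).elim id id)
    ?_ ?_ ?_ ?_ <;> intro i <;> simp only [mem_coe, mem_throughTop, mem_throughBot] <;>
    rintro ⟨j, hj⟩ <;> simp [hj, partner hj]

lemma throughTop_eq_empty_iff {d : Perm (Fin m ⊕ Fin m)} :
    throughTop d = ∅ ↔ diagRank d = 0 :=
  card_eq_zero.symm

lemma IsBrauerMatching.permCongr {d : Perm (Fin m ⊕ Fin m)} (hd : IsBrauerMatching d)
    (c : Perm (Fin m ⊕ Fin m)) : IsBrauerMatching (c.permCongr d) :=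
  ⟨fun x => by simp [hd.1], fun x => by simpa [eq_symm_apply] using hd.2 (c.symm x)⟩

variable (β α : Perm (Fin m)) (d : Perm (Fin m ⊕ Fin m)) (i : Fin m)

lemma mem_throughTop_permCongr_sumCongr :
    β i ∈ throughTop ((sumCongr β α).permCongr d) ↔ i ∈ throughTop d := by
  rcases h : d (inl i) <;> simp [mem_throughTop, h]

lemma mem_throughBot_permCongr_sumCongr :
    α i ∈ throughBot ((sumCongr β α).permCongr d) ↔ i ∈ throughBot d := by
  rcases h : d (inr i) <;> simp [mem_throughBot, h]

end ThroughStrands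

section Juxtaposition

open Sum

variable {a b : ℕ}

def juxtEquiv (a b : ℕ) : (Fin a ⊕ Fin a) ⊕ (Fin b ⊕ Fin b) ≃ Fin (a + b) ⊕ Fin (a + b) :=
  (sumSumSumComm (Fin a) (Fin a) (Fin b) (Fin b)).trans (sumCongr finSumFinEquiv finSumFinEquiv)

lemma juxt_eq_permCongr (d₀ : Perm (Fin a ⊕ Fin a)) (d₁ : Perm (Fin b ⊕ Fin b)) :
    juxt d₀ d₁ = (juxtEquiv a b).permCongr (sumCongr d₀ d₁) := rfl

@[simp]
lemma juxtEquiv_inl (z : Fin a ⊕ Fin a) :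
    juxtEquiv a b (inl z) = Sum.map (Fin.castAdd b) (Fin.castAdd b) z := by
  cases z <;> simp [juxtEquiv, sumSumSumComm]

@[simp]
lemma juxtEquiv_inr (z : Fin b ⊕ Fin b) :
    juxtEquiv a b (inr z) = Sum.map (Fin.natAdd a) (Fin.natAdd a) z := by
  cases z <;> simp [juxtEquiv, sumSumSumComm]

lemma exists_eq_juxt_of_mapsTo {e : Perm (Fin (a + b) ⊕ Fin (a + b))}
    (he : Set.MapsTo e (Set.range (Sum.map (Fin.castAdd b) (Fin.castAdd b)))
      (Set.range (Sum.map (Fin.castAdd b) (Fin.castAdd b)))) :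
    ∃ d₀ d₁, e = juxt d₀ d₁ := by
  have hK : Set.MapsTo ((juxtEquiv a b).symm.permCongr e) (Set.range inl) (Set.range inl) := by
    rintro _ ⟨z, rfl⟩
    obtain ⟨w, hw⟩ := he ⟨z, rfl⟩
    exact ⟨w, by simp [← hw, eq_symm_apply]⟩
  obtain ⟨⟨d₀, d₁⟩, hd⟩ := Perm.mem_sumCongrHom_range_of_perm_mapsTo_inl hK
  refine ⟨d₀, d₁, ?_⟩
  change Equiv.sumCongr d₀ d₁ = _ at hd
  rw [juxt_eq_permCongr, hd]
  ext x
  simp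

variable (d₀ : Perm (Fin a ⊕ Fin a)) (d₁ : Perm (Fin b ⊕ Fin b))

lemma juxt_apply_map_castAdd (z : Fin a ⊕ Fin a) :
    juxt d₀ d₁ (Sum.map (Fin.castAdd b) (Fin.castAdd b) z) =
      Sum.map (Fin.castAdd b) (Fin.castAdd b) (d₀ z) := by
  rw [← juxtEquiv_inl, juxt_eq_permCongr, permCongr_apply, symm_apply_apply]
  simp

lemma juxt_apply_map_natAdd (z : Fin b ⊕ Fin b) :
    juxt d₀ d₁ (Sum.map (Fin.natAdd a) (Fin.natAdd a) z) =
      Sum.map (Fin.natAdd a) (Fin.natAdd a) (d₁ z) := by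
  rw [← juxtEquiv_inr, juxt_eq_permCongr, permCongr_apply, symm_apply_apply]
  simp

@[simp]
lemma mem_throughTop_juxt_castAdd (i : Fin a) :
    Fin.castAdd b i ∈ throughTop (juxt d₀ d₁) ↔ i ∈ throughTop d₀ := by
  have := juxt_apply_map_castAdd d₀ d₁ (inl i)
  rcases h : d₀ (inl i) <;> simp_all [mem_throughTop]

@[simp]
lemma mem_throughTop_juxt_natAdd (i : Fin b) :
    Fin.natAdd a i ∈ throughTop (juxt d₀ d₁) ↔ i ∈ throughTop d₁ := by
  have := juxt_apply_map_natAdd d₀ d₁ (inl i)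
  rcases h : d₁ (inl i) <;> simp_all [mem_throughTop]

@[simp]
lemma mem_throughBot_juxt_castAdd (i : Fin a) :
    Fin.castAdd b i ∈ throughBot (juxt d₀ d₁) ↔ i ∈ throughBot d₀ := by
  have := juxt_apply_map_castAdd d₀ d₁ (inr i)
  rcases h : d₀ (inr i) <;> simp_all [mem_throughBot]

@[simp]
lemma mem_throughBot_juxt_natAdd (i : Fin b) :
    Fin.natAdd a i ∈ throughBot (juxt d₀ d₁) ↔ i ∈ throughBot d₁ := by
  have := juxt_apply_map_natAdd d₀ d₁ (inr i)
  rcases h : d₁ (inr i) <;> simp_all [mem_throughBot]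

lemma isBrauerMatching_juxt :
    IsBrauerMatching (juxt d₀ d₁) ↔ IsBrauerMatching d₀ ∧ IsBrauerMatching d₁ := by
  simp only [IsBrauerMatching, juxt_eq_permCongr,
    ← (juxtEquiv a b).forall_congr_right (q := fun y => _ = y),
    ← (juxtEquiv a b).forall_congr_right (q := fun y => _ ≠ y)]
  simp only [permCongr_apply, symm_apply_apply, (juxtEquiv a b).apply_eq_iff_eq, ne_eq,
    Sum.forall, sumCongr_apply, map_inl, map_inr, inl.injEq, inr.injEq]
  tauto

lemma juxt_inj {d₀' : Perm (Fin a ⊕ Fin a)} {d₁' : Perm (Fin b ⊕ Fin b)} :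
    juxt d₀ d₁ = juxt d₀' d₁' ↔ d₀ = d₀' ∧ d₁ = d₁' := by
  rw [juxt_eq_permCongr, juxt_eq_permCongr, (juxtEquiv a b).permCongr.injective.eq_iff,
    ← Prod.mk_inj]
  exact Perm.sumCongrHom_injective.eq_iff (a := (d₀, d₁)) (b := (d₀', d₁'))

end Juxtaposition

section PermutationDiagram

open Sum

variable {s : ℕ}

@[simp]
lemma permDiag_inl (π : Perm (Fin s)) (i : Fin s) : permDiag π (inl i) = inr (π i) := rfl

@[simp]
lemma permDiag_inr (π : Perm (Fin s)) (i : Fin s) : permDiag π (inr i) = inl (π⁻¹ i) := rfl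

lemma permDiag_injective : Function.Injective (permDiag (s := s)) :=
  fun π π' h => Equiv.ext fun i => by simpa using congr($h (inl i))

lemma exists_eq_permDiag {d : Perm (Fin s ⊕ Fin s)} (hd : ∀ x, d (d x) = x)
    (htop : ∀ i, i ∈ throughTop d) : ∃ π, d = permDiag π := by
  have hK : Set.MapsTo (d.trans (sumComm _ _)) (Set.range inl) (Set.range inl) := by
    rintro _ ⟨i, rfl⟩
    obtain ⟨j, hj⟩ := by simpa [mem_throughTop] using htop i
    exact ⟨j, by simp [hj]⟩
  obtain ⟨⟨π, π'⟩, hπ⟩ := Perm.mem_sumCongrHom_range_of_perm_mapsTo_inl hK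
  have hinl (i) : d (inl i) = inr (π i) := by simpa using congr(Sum.swap ($hπ (inl i))).symm
  have hinr (i) : d (inr i) = inl (π' i) := by simpa using congr(Sum.swap ($hπ (inr i))).symm
  refine ⟨π, Equiv.ext ?_⟩
  rintro (i | i)
  · simp [hinl]
  · have := hd (inr i)
    simp only [hinr, hinl, inr.injEq] at this
    simpa [hinr] using π.eq_symm_apply.mpr this

@[simp]
lemma mem_throughTop_permDiag (π : Perm (Fin s)) (i : Fin s) :
    i ∈ throughTop (permDiag π) := by
  simp [mem_throughTop]

@[simp]
lemma mem_throughBot_permDiag (π : Perm (Fin s)) (i : Fin s) :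
    i ∈ throughBot (permDiag π) := by
  simp [mem_throughBot]

end PermutationDiagram

section Decomposition

open Sum

variable {a b : ℕ}

lemma mem_throughTop_juxt_permDiag {d₀ : Perm (Fin a ⊕ Fin a)} (hd₀ : diagRank d₀ = 0)
    (π : Perm (Fin b)) (i : Fin (a + b)) : i ∈ throughTop (juxt d₀ (permDiag π)) ↔ a ≤ i := by
  rw [← throughTop_eq_empty_iff] at hd₀
  induction i using Fin.addCases <;> simp [hd₀]

lemma mem_throughBot_juxt_permDiag {d₀ : Perm (Fin a ⊕ Fin a)} (hinv : ∀ x, d₀ (d₀ x) = x)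
    (hd₀ : diagRank d₀ = 0) (π : Perm (Fin b)) (i : Fin (a + b)) :
    i ∈ throughBot (juxt d₀ (permDiag π)) ↔ a ≤ i := by
  have : throughBot d₀ = ∅ := card_eq_zero.mp ((card_throughBot hinv).trans hd₀)
  induction i using Fin.addCases <;> simp [this]

lemma mapsTo_range_map_castAdd {e : Perm (Fin (a + b) ⊕ Fin (a + b))} (he : ∀ x, e (e x) = x)
    (htop : ∀ i, i ∈ throughTop e ↔ a ≤ i) (hbot : ∀ i, i ∈ throughBot e ↔ a ≤ i) :
    Set.MapsTo e (Set.range (Sum.map (Fin.castAdd b) (Fin.castAdd b)))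
      (Set.range (Sum.map (Fin.castAdd b) (Fin.castAdd b))) := by
  have castAdd_of_not_le {i : Fin (a + b)} (hi : ¬ a ≤ i) : i ∈ Set.range (Fin.castAdd b) :=
    ⟨⟨i, by omega⟩, rfl⟩
  rintro _ ⟨z | z, rfl⟩
  · rcases h : e (inl (Fin.castAdd b z)) with y | y
    · have : y ∉ throughTop e := by simp [mem_throughTop, ← h, he]
      obtain ⟨y, rfl⟩ := castAdd_of_not_le ((htop y).not.mp this)
      exact ⟨inl y, h.symm⟩
    · exact absurd ((htop _).mp (mem_throughTop.mpr ⟨y, h⟩)) (by simp)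
  · rcases h : e (inr (Fin.castAdd b z)) with y | y
    · exact absurd ((hbot _).mp (mem_throughBot.mpr ⟨y, h⟩)) (by simp)
    · have : y ∉ throughBot e := by simp [mem_throughBot, ← h, he]
      obtain ⟨y, rfl⟩ := castAdd_of_not_le ((hbot y).not.mp this)
      exact ⟨inr y, h.symm⟩

lemma exists_eq_juxt_permDiag {e : Perm (Fin (a + b) ⊕ Fin (a + b))} (he : IsBrauerMatching e)
    (htop : ∀ i, i ∈ throughTop e ↔ a ≤ i) (hbot : ∀ i, i ∈ throughBot e ↔ a ≤ i) :
    ∃ d₀ π, IsBrauerMatching d₀ ∧ diagRank d₀ = 0 ∧ e = juxt d₀ (permDiag π) := by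
  obtain ⟨d₀, d₁, rfl⟩ := exists_eq_juxt_of_mapsTo (mapsTo_range_map_castAdd he.1 htop hbot)
  obtain ⟨hd₀, hd₁⟩ := (isBrauerMatching_juxt d₀ d₁).mp he
  obtain ⟨π, rfl⟩ := exists_eq_permDiag hd₁.1 fun i => by simpa using htop (Fin.natAdd a i)
  refine ⟨d₀, π, hd₀, throughTop_eq_empty_iff.mp (eq_empty_of_forall_notMem fun i => ?_), rfl⟩
  simpa [Nat.not_le.mpr i.2] using htop (Fin.castAdd b i)

end Decomposition

/-- Left multiplication by the permutation diagram of `α` and right multiplication by that of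
`β*` relabel the bottom vertices by `α` and the top vertices by `β`, i.e. conjugate by
`sumCongr β α`. -/
theorem stmt_18 (f s : ℕ) (d : Equiv.Perm (Fin (2 * f + s) ⊕ Fin (2 * f + s)))
    (hd : IsBrauerMatching d) (hrank : diagRank d = s) :
    ∃! q : Equiv.Perm (Fin (2 * f + s)) × Equiv.Perm (Fin (2 * f + s)) ×
        Equiv.Perm (Fin (2 * f) ⊕ Fin (2 * f)) × Equiv.Perm (Fin s),
      IsShuffle (2 * f + s) (2 * f) q.1 ∧ IsShuffle (2 * f + s) (2 * f) q.2.1 ∧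
      IsBrauerMatching q.2.2.1 ∧ diagRank q.2.2.1 = 0 ∧
      d = (Equiv.sumCongr q.2.1 q.1).permCongr (juxt q.2.2.1 (permDiag q.2.2.2)) := by
  have hT : #(throughTop d) = s := hrank
  have hB : #(throughBot d) = s := (card_throughBot hd.1).trans hrank
  set β := shuffleOf (k := 2 * f) _ hT
  set α := shuffleOf (k := 2 * f) _ hB
  have hconj : d = (Equiv.sumCongr β α).permCongr ((Equiv.sumCongr β α).symm.permCongr d) := by
    ext x; simp
  obtain ⟨d₀, π, hd₀, hr₀, hJ⟩ := exists_eq_juxt_permDiag (hd.permCongr _)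
    (fun i => by rw [← mem_throughTop_permCongr_sumCongr β α, ← hconj, shuffleOf_mem_iff])
    (fun i => by rw [← mem_throughBot_permCongr_sumCongr β α, ← hconj, shuffleOf_mem_iff])
  rw [hJ] at hconj
  refine ⟨(α, β, d₀, π), ⟨isShuffle_shuffleOf _ _, isShuffle_shuffleOf _ _, hd₀, hr₀, hconj⟩, ?_⟩
  rintro ⟨α', β', d₀', π'⟩ ⟨hα', hβ', hd₀', hr₀', hconj'⟩
  obtain rfl : β' = β := eq_shuffleOf _ hT hβ' fun i => by
    rw [hconj', mem_throughTop_permCongr_sumCongr, mem_throughTop_juxt_permDiag hr₀']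
  obtain rfl : α' = α := eq_shuffleOf _ hB hα' fun i => by
    rw [hconj', mem_throughBot_permCongr_sumCongr, mem_throughBot_juxt_permDiag hd₀'.1 hr₀']
  obtain ⟨rfl, hπ⟩ := (juxt_inj _ _).mp
    ((Equiv.sumCongr β α).permCongr.injective (hconj'.symm.trans hconj))
  obtain rfl : π' = π := permDiag_injective hπ
  rfl
end
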